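/- arXiv:1003.5783 — 3 statements merged into one kernel-verified Lean document; each statement's English description precedes it below -/
import Mathlib

section
/- For every connected s-regular finite loopless multigraph G, the resistance is at most the oddness: r(G) ≤ ξ(G). -/
/-- A finite multigraph: finite vertex and edge types together with an incidence map
assigning to each edge an unordered pair of vertices. -/
structure Mgraph where
  V : Type
  E : Type
  [finV : Finite V]
  [finE : Finite E]
  inc : E → Sym2 V

attribute [instance] Mgraph.finV Mgraph.finE

namespace Mgraph

/-- A multigraph is loopless if no edge joins a vertex to itself. -/
def Loopless (G : Mgraph) : Prop := ∀ e : G.E, ¬ (G.inc e).IsDiag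

/-- The degree of a vertex: the number of edges incident with it. -/
noncomputable def degree (G : Mgraph) (v : G.V) : ℕ :=
  Nat.card {e : G.E // v ∈ G.inc e}

/-- The maximum degree Δ(G). -/
noncomputable def maxDegree (G : Mgraph) : ℕ :=
  sSup (Set.range G.degree)

/-- `G` is `s`-regular. -/
def Regular (G : Mgraph) (s : ℕ) : Prop := ∀ v : G.V, G.degree v = s

/-- A proper edge coloring with `k` colors: adjacent (distinct, sharing an endpoint)
edges receive different colors. -/
def IsProperEdgeColoring (G : Mgraph) {k : ℕ} (c : G.E → Fin k) : Prop :=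
  ∀ e f : G.E, e ≠ f → (∃ v : G.V, v ∈ G.inc e ∧ v ∈ G.inc f) → c e ≠ c f

/-- `G` admits a proper edge coloring with `k` colors. -/
def EdgeColorable (G : Mgraph) (k : ℕ) : Prop :=
  ∃ c : G.E → Fin k, G.IsProperEdgeColoring c

/-- The chromatic index χ'(G). -/
noncomputable def chromaticIndex (G : Mgraph) : ℕ :=
  sInf {k : ℕ | G.EdgeColorable k}

/-- `G` is class 1, i.e. χ'(G) = Δ(G). -/
noncomputable def ClassOne (G : Mgraph) : Prop := G.chromaticIndex = G.maxDegree

/-- Delete a set of edges from `G`. -/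
def deleteEdges (G : Mgraph) (S : Set G.E) : Mgraph where
  V := G.V
  E := {e : G.E // e ∉ S}
  inc e := G.inc e.1

/-- Delete a set of vertices from `G`, together with all incident edges. -/
def deleteVerts (G : Mgraph) (S : Set G.V) : Mgraph where
  V := {v : G.V // v ∉ S}
  E := {e : G.E // ∀ v : G.V, v ∈ G.inc e → v ∉ S}
  inc e := (G.inc e.1).pmap (fun v hv => ⟨v, hv⟩) e.2

/-- The simple graph on `V(G)` whose adjacency is realized by the edges in `F`. -/
def factorGraph (G : Mgraph) (F : Set G.E) : SimpleGraph G.V where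
  Adj u w := u ≠ w ∧ ∃ e ∈ F, G.inc e = s(u, w)
  symm := by
    constructor
    rintro u w ⟨hne, e, heF, he⟩
    exact ⟨hne.symm, e, heF, by rw [he]; exact Sym2.eq_swap⟩
  loopless := by constructor; rintro v ⟨hne, -⟩; exact hne rfl

/-- `G` is connected (in particular nonempty). -/
def Connected (G : Mgraph) : Prop := (G.factorGraph Set.univ).Connected

/-- `G` is 2-connected: it has at least 3 vertices and deleting any single vertex
leaves a connected graph. -/
def TwoConnected (G : Mgraph) : Prop :=
  3 ≤ Nat.card G.V ∧ ∀ v : G.V, (G.deleteVerts {v}).Connected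

/-- The number of odd cycles in the spanning subgraph of `G` with edge set `F`:
the number of connected components of odd cardinality. -/
noncomputable def oddCycles (G : Mgraph) (F : Set G.E) : ℕ :=
  Nat.card {C : (G.factorGraph F).ConnectedComponent //
    Odd (Nat.card {v : G.V // (G.factorGraph F).connectedComponentMk v = C})}

/-- `F` is a 1-factor (perfect matching): every vertex meets exactly one edge of `F`. -/
def IsOneFactor (G : Mgraph) (F : Set G.E) : Prop :=
  ∀ v : G.V, Nat.card {e : G.E // e ∈ F ∧ v ∈ G.inc e} = 1

/-- `F` is a 2-factor (spanning 2-regular subgraph): every vertex meets exactly two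
edges of `F`. -/
def IsTwoFactor (G : Mgraph) (F : Set G.E) : Prop :=
  ∀ v : G.V, Nat.card {e : G.E // e ∈ F ∧ v ∈ G.inc e} = 2

/-- `f` encodes a decomposition of the edge set of `G` into `n` 2-factors
(the fibers of `some i`), together with, possibly, one 1-factor (the fiber of `none`,
which is required to be empty when no 1-factor is used). -/
def IsDecomp (G : Mgraph) {n : ℕ} (f : G.E → Option (Fin n)) : Prop :=
  ((∀ e : G.E, f e ≠ none) ∨ G.IsOneFactor {e | f e = none}) ∧
    ∀ i : Fin n, G.IsTwoFactor {e | f e = some i}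

/-- The total number of odd cycles of the 2-factors of a decomposition. -/
noncomputable def decompOdd (G : Mgraph) {n : ℕ} (f : G.E → Option (Fin n)) : ℕ :=
  ∑ i : Fin n, G.oddCycles {e | f e = some i}

/-- The oddness ξ(G): the minimum total number of odd cycles over all decompositions of
the edge set into 2-factors (together with one 1-factor when the degree is odd);
`⊤` if no such decomposition exists. -/
noncomputable def oddness (G : Mgraph) : ℕ∞ :=
  sInf {k : ℕ∞ | ∃ (n : ℕ) (f : G.E → Option (Fin n)),
    G.IsDecomp f ∧ k = (G.decompOdd f : ℕ∞)}

/-- The minimum number of edges whose removal from `G` leaves a graph that is properly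
edge colorable with `D` colors. -/
noncomputable def resistanceTo (G : Mgraph) (D : ℕ) : ℕ :=
  sInf {k : ℕ | ∃ S : Set G.E, Nat.card S = k ∧ (G.deleteEdges S).EdgeColorable D}

/-- The resistance r(G): the minimum number of edges whose removal from `G` leaves a
Δ(G)-edge-colorable graph. -/
noncomputable def resistance (G : Mgraph) : ℕ := G.resistanceTo G.maxDegree

/-- The vertex resistance r_v(G): the minimum number of vertices whose removal from `G`
leaves a class 1 graph. -/
noncomputable def rv (G : Mgraph) : ℕ :=
  sInf {k : ℕ | ∃ S : Set G.V, Nat.card S = k ∧ (G.deleteVerts S).ClassOne}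

/-- The vertex resistance r'_v(G): the minimum number of vertices whose removal from `G`
leaves a graph `H` with χ'(H) ≤ Δ(G). -/
noncomputable def rv' (G : Mgraph) : ℕ :=
  sInf {k : ℕ | ∃ S : Set G.V, Nat.card S = k ∧
    (G.deleteVerts S).chromaticIndex ≤ G.maxDegree}

/-- The edge boundary ∂_G(X): the set of edges with one endpoint in `X` and one
endpoint outside `X`. -/
def edgeBoundary (G : Mgraph) (X : Set G.V) : Set G.E :=
  {e : G.E | ∃ u ∈ G.inc e, ∃ w ∈ G.inc e, u ∈ X ∧ w ∉ X}

/-- `G` is an `s`-graph: a loopless `s`-regular multigraph with `|∂_G(X)| ≥ s` for every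
odd set `X` of vertices. -/
def IsSGraph (G : Mgraph) (s : ℕ) : Prop :=
  G.Loopless ∧ G.Regular s ∧
    ∀ X : Set G.V, Odd (Nat.card X) → s ≤ Nat.card (G.edgeBoundary X)

end Mgraph


/-!
Fix a decomposition of `G` into 2-factors `F₀, …, Fₙ₋₁` and, when `s` is odd, a perfect
matching `M`, so that `s = 2n` or `s = 2n + 1`. Each `Fᵢ` is a disjoint union of cycles;
removing one edge from each odd cycle leaves even cycles and paths, which are properly colored
with the two colors `2i` and `2i + 1`, and `M` receives the color `2n`. This deletes at most
`ξ(G)` edges and leaves an `s`-edge-colorable graph.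

The cycles of a 2-factor are handled through its darts (an edge with a chosen endpoint). If `α`
moves a dart to the other end of its edge and `β` to the other edge at its vertex, the cycles of
`β ∘ α` are the cycles of the 2-factor, each traversed once in each direction, and `α` swaps the
two traversals. Choosing one traversal per cycle and coloring each edge by the parity of the
position of its dart along that traversal gives the coloring: consecutive edges get different
colors except at the return to the starting point of an odd cycle.
-/

open Function Equiv

namespace Equiv.Perm

variable {D : Type*}

theorem card_sameCycle [Finite D] (σ : Perm D) (x : D) :
    Nat.card {y // σ.SameCycle x y} = minimalPeriod σ x := by
  have hbij : Bijective fun k : Fin (minimalPeriod σ x) =>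
      (⟨σ^[k] x, by rw [iterate_eq_pow]; exact sameCycle_pow_right.2 .rfl⟩ :
        {y // σ.SameCycle x y}) := by
    refine ⟨fun k l h => Fin.ext (iterate_injOn_Iio_minimalPeriod k.2 l.2
      (congrArg Subtype.val h)), ?_⟩
    rintro ⟨y, hy⟩
    obtain ⟨k, rfl⟩ := hy.exists_nat_pow_eq
    refine ⟨⟨k % minimalPeriod σ x, Nat.mod_lt _
      (minimalPeriod_pos_of_mem_periodicPts (σ.injective.mem_periodicPts x))⟩, ?_⟩
    simp only [iterate_mod_minimalPeriod_eq, iterate_eq_pow]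
  rw [← Nat.card_eq_of_bijective _ hbij, Nat.card_eq_fintype_card, Fintype.card_fin]

section Position

variable (σ : Perm D)

noncomputable def cycleBase (x : D) : D :=
  (Quotient.mk (SameCycle.setoid σ) x).out

theorem sameCycle_cycleBase (x : D) : σ.SameCycle (σ.cycleBase x) x :=
  Quotient.mk_out (s := SameCycle.setoid σ) x

variable {σ} in
theorem SameCycle.cycleBase_eq {x y : D} (h : σ.SameCycle x y) : σ.cycleBase x = σ.cycleBase y :=
  congrArg Quotient.out (Quotient.sound h)

variable [Finite D]

open Classical in
noncomputable def cyclePos (x : D) : ℕ :=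
  Nat.find (σ.sameCycle_cycleBase x).exists_nat_pow_eq

theorem pow_cyclePos_cycleBase (x : D) : (σ ^ σ.cyclePos x) (σ.cycleBase x) = x := by
  classical exact Nat.find_spec (σ.sameCycle_cycleBase x).exists_nat_pow_eq

theorem cyclePos_le {x : D} {k : ℕ} (h : (σ ^ k) (σ.cycleBase x) = x) : σ.cyclePos x ≤ k := by
  classical exact Nat.find_min' _ h

theorem cyclePos_apply (x : D) :
    σ.cyclePos (σ x) = σ.cyclePos x + 1 ∨ σ x = σ.cycleBase x := by
  have hbase : σ.cycleBase (σ x) = σ.cycleBase x := (sameCycle_apply_right.2 .rfl).cycleBase_eq.symm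
  have hpos := σ.pow_cyclePos_cycleBase (σ x)
  rw [hbase] at hpos
  obtain h | h := Nat.eq_zero_or_pos (σ.cyclePos (σ x))
  · right; rw [h] at hpos; exact hpos.symm
  · left
    have hle : σ.cyclePos (σ x) ≤ σ.cyclePos x + 1 := by
      refine σ.cyclePos_le ?_
      rw [hbase, pow_succ', mul_apply, pow_cyclePos_cycleBase]
    have hge : σ.cyclePos x ≤ σ.cyclePos (σ x) - 1 := by
      refine σ.cyclePos_le ?_
      apply σ.injective
      rw [← mul_apply, ← pow_succ', Nat.sub_add_cancel (by omega), hpos]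
    omega

end Position

theorem exists_coloring [Finite D] (σ : Perm D) :
    ∃ c : D → Fin 2, ∀ x, c (σ x) = c x →
      Odd (minimalPeriod σ x) ∧ ∀ y, σ.SameCycle x y → c (σ y) = c y → y = x := by
  -- the parity of the position changes at every step except the return to the base point
  let c : D → Fin 2 := fun x => ⟨σ.cyclePos x % 2, Nat.mod_lt _ two_pos⟩
  have hwrap : ∀ x, c (σ x) = c x → σ x = σ.cycleBase x := fun x hx =>
    (σ.cyclePos_apply x).resolve_left fun h => by simp [c, Fin.ext_iff, h] at hx; omega
  refine ⟨c, fun x hx => ⟨?_, fun y hxy hy => ?_⟩⟩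
  · have hb := hwrap x hx
    have hzero : σ.cyclePos (σ x) = 0 := by
      refine Nat.le_zero.1 (σ.cyclePos_le ?_)
      rw [pow_zero, one_apply, ← (sameCycle_apply_right.2 .rfl).cycleBase_eq, hb]
    have hper : IsPeriodicPt σ (σ.cyclePos x + 1) (σ.cycleBase x) := by
      rw [IsPeriodicPt, IsFixedPt, iterate_eq_pow, pow_succ', mul_apply,
        pow_cyclePos_cycleBase, hb]
    have heven : Even (σ.cyclePos x) := by
      simp only [c, Fin.ext_iff, hzero] at hx
      exact Nat.even_iff.2 hx.symm
    rw [← σ.pow_cyclePos_cycleBase x, ← iterate_eq_pow,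
      minimalPeriod_apply_iterate (mem_periodicPts.2 ⟨_, Nat.succ_pos _, hper⟩)]
    exact (heven.add_one).of_dvd_nat hper.minimalPeriod_dvd
  · apply σ.injective
    rw [hwrap y hy, hwrap x hx, hxy.cycleBase_eq]

section Involutions

variable {α β : Perm D} (hα : Involutive α) (hβ : Involutive β)
include hα hβ

theorem semiconjBy_mul_inv_of_involutive : SemiconjBy α (β * α) (β * α)⁻¹ := by
  ext x
  change α (β (α x)) = α.symm (β.symm (α x))
  rw [eq_comm, symm_apply_eq, symm_apply_eq, hα, hβ]

theorem SameCycle.apply_of_involutive {x y : D} (h : (β * α).SameCycle x y) :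
    (β * α).SameCycle (α x) (α y) := by
  obtain ⟨k, rfl⟩ := h
  refine sameCycle_inv.1 ⟨k, ?_⟩
  have := congrArg (· x) ((semiconjBy_mul_inv_of_involutive hα hβ).zpow_right k).eq
  simpa using this.symm

theorem not_sameCycle_apply_of_involutive (hα' : ∀ x, α x ≠ x) (hβ' : ∀ x, β x ≠ x) (x : D) :
    ¬ (β * α).SameCycle x (α x) := by
  -- if `(β * α) ^ k` maps `x` to `α x`, the point halfway along is fixed by `α` or by `β`
  rintro ⟨k, hk⟩
  have key : ∀ j : ℤ, α (((β * α) ^ j) x) = ((β * α) ^ (k - j)) x := by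
    intro j
    have := congrArg (· x) ((semiconjBy_mul_inv_of_involutive hα hβ).zpow_right j).eq
    simp only [mul_apply, inv_zpow'] at this
    rw [this, ← hk, ← mul_apply, ← zpow_add, neg_add_eq_sub]
  obtain ⟨j, rfl | rfl⟩ := Int.even_or_odd' k
  · exact hα' _ ((key j).trans (by rw [two_mul, add_sub_cancel_right]))
  · apply hβ' (((β * α) ^ (j + 1)) x)
    calc β (((β * α) ^ (j + 1)) x) = (β * α) (α (((β * α) ^ (j + 1)) x)) := by
          rw [mul_apply, hα]
      _ = ((β * α) ^ (j + 1)) x := by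
          rw [key, ← mul_apply, ← zpow_one_add]; congr 2; ring

end Involutions

theorem exists_transversal_of_involutive (σ α : Perm D) (hα : Involutive α)
    (hσα : ∀ {x y}, σ.SameCycle x y → σ.SameCycle (α x) (α y))
    (hne : ∀ x, ¬ σ.SameCycle x (α x)) :
    ∃ P : Set D, (∀ {x y}, σ.SameCycle x y → (x ∈ P ↔ y ∈ P)) ∧ ∀ x, α x ∈ P ↔ x ∉ P := by
  -- of the cycles of `x` and `α x`, keep the smaller one for a well-order on the cycles
  let _ : LinearOrder (Quotient (SameCycle.setoid σ)) := WellOrderingRel.isWellOrder.linearOrder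
  let q : D → Quotient (SameCycle.setoid σ) := Quotient.mk _
  refine ⟨{x | q x < q (α x)}, fun {x y} h => ?_, fun x => ?_⟩
  · have hx : q x = q y := Quotient.sound h
    have hαx : q (α x) = q (α y) := Quotient.sound (hσα h)
    change q x < q (α x) ↔ q y < q (α y)
    rw [hx, hαx]
  · have hqx : q (α x) ≠ q x := fun h => hne x (Quotient.exact h).symm
    change q (α x) < q (α (α x)) ↔ ¬ q x < q (α x)
    rw [hα x, not_lt, hqx.le_iff_lt]

end Equiv.Perm

section TwoElements

variable {T : Type*} (h : Nat.card T = 2)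

noncomputable def otherOfCardEqTwo (t : T) : T :=
  ((Nat.card_eq_two_iff' t).1 h).choose

theorem otherOfCardEqTwo_ne (t : T) : otherOfCardEqTwo h t ≠ t :=
  ((Nat.card_eq_two_iff' t).1 h).choose_spec.1

theorem eq_otherOfCardEqTwo {s t : T} (hst : s ≠ t) : s = otherOfCardEqTwo h t :=
  ((Nat.card_eq_two_iff' t).1 h).choose_spec.2 s hst

theorem otherOfCardEqTwo_involutive : Function.Involutive (otherOfCardEqTwo h) := fun t =>
  (eq_otherOfCardEqTwo h (otherOfCardEqTwo_ne h t).symm).symm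

end TwoElements

namespace Mgraph

variable {G : Mgraph} {F : Set G.E}

@[ext]
structure Dart (G : Mgraph) (F : Set G.E) where
  e : G.E
  v : G.V
  mem_F : e ∈ F
  mem_inc : v ∈ G.inc e

def IsProperEdgeColoringOn (G : Mgraph) (A : Set G.E) {k : ℕ} (c : G.E → Fin k) : Prop :=
  ∀ e ∈ A, ∀ f ∈ A, e ≠ f → (∃ v : G.V, v ∈ G.inc e ∧ v ∈ G.inc f) → c e ≠ c f

namespace Dart

instance : Finite (Dart G F) :=
  Finite.of_injective (fun d => (d.e, d.v)) fun _ _ h =>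
    Dart.ext (congrArg Prod.fst h) (congrArg Prod.snd h)

noncomputable def symm (d : Dart G F) : Dart G F :=
  ⟨d.e, Sym2.Mem.other d.mem_inc, d.mem_F, Sym2.other_mem d.mem_inc⟩

theorem symm_involutive : Involutive (symm : Dart G F → Dart G F) := fun _ =>
  Dart.ext rfl (Sym2.other_invol _ _)

theorem symm_v_ne (hG : G.Loopless) (d : Dart G F) : d.symm.v ≠ d.v :=
  Sym2.other_ne (hG d.e) d.mem_inc

theorem symm_ne (hG : G.Loopless) (d : Dart G F) : d.symm ≠ d :=
  fun h => d.symm_v_ne hG (congrArg v h)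

theorem eq_or_eq_symm {d d' : Dart G F} (h : d'.e = d.e) : d' = d ∨ d' = d.symm := by
  have hmem := d'.mem_inc
  rw [h, ← Sym2.other_spec d.mem_inc, Sym2.mem_iff] at hmem
  exact hmem.imp (Dart.ext h) (Dart.ext h)

theorem symm_v_eq {d : Dart G F} {w : G.V} (h : G.inc d.e = s(d.v, w)) : d.symm.v = w :=
  Sym2.congr_right.1 ((Sym2.other_spec d.mem_inc).trans h)

theorem adj_symm (hG : G.Loopless) (d : Dart G F) : (G.factorGraph F).Adj d.v d.symm.v :=
  ⟨(d.symm_v_ne hG).symm, d.e, d.mem_F, (Sym2.other_spec d.mem_inc).symm⟩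

noncomputable def turn (hF : G.IsTwoFactor F) (d : Dart G F) : Dart G F :=
  let e' := otherOfCardEqTwo (hF d.v) ⟨d.e, d.mem_F, d.mem_inc⟩
  ⟨e'.1, d.v, e'.2.1, e'.2.2⟩

variable (hF : G.IsTwoFactor F)
include hF

theorem turn_involutive : Involutive (turn hF) := fun d =>
  Dart.ext (congrArg Subtype.val (otherOfCardEqTwo_involutive (hF d.v) _)) rfl

theorem turn_ne (d : Dart G F) : turn hF d ≠ d := fun h =>
  otherOfCardEqTwo_ne (hF d.v) _ (Subtype.ext (congrArg e h))

theorem eq_or_eq_turn {d d' : Dart G F} (h : d'.v = d.v) : d' = d ∨ d' = turn hF d := by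
  by_cases he : d'.e = d.e
  · exact Or.inl (Dart.ext he h)
  · refine Or.inr (Dart.ext ?_ h)
    exact congrArg Subtype.val (eq_otherOfCardEqTwo (hF d.v)
      (s := ⟨d'.e, d'.mem_F, h ▸ d'.mem_inc⟩) fun h' => he (congrArg Subtype.val h'))

end Dart

noncomputable def step (hF : G.IsTwoFactor F) : Perm (Dart G F) :=
  (Dart.turn_involutive hF).toPerm * Dart.symm_involutive.toPerm

section Step

variable (hF : G.IsTwoFactor F)

theorem step_apply (d : Dart G F) : step hF d = d.symm.turn hF := rfl

theorem step_symm (d : Dart G F) : step hF d.symm = d.turn hF := by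
  rw [step_apply, Dart.symm_involutive]

theorem step_inv_apply (d : Dart G F) : (step hF)⁻¹ d = (d.turn hF).symm := by
  rw [Perm.inv_eq_iff_eq, step_apply, Dart.symm_involutive, Dart.turn_involutive]

theorem not_sameCycle_symm (hG : G.Loopless) (d : Dart G F) : ¬ (step hF).SameCycle d d.symm :=
  Perm.not_sameCycle_apply_of_involutive (α := Dart.symm_involutive.toPerm)
    (β := (Dart.turn_involutive hF).toPerm) Dart.symm_involutive (Dart.turn_involutive hF)
    (Dart.symm_ne hG) (Dart.turn_ne hF) d

theorem reachable_of_sameCycle (hG : G.Loopless) {d d' : Dart G F}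
    (h : (step hF).SameCycle d d') : (G.factorGraph F).Reachable d.v d'.v := by
  obtain ⟨k, rfl⟩ := h.exists_nat_pow_eq
  clear h
  induction k with
  | zero => rfl
  | succ k ih =>
    rw [pow_succ', Perm.mul_apply]
    exact ih.trans (Dart.adj_symm hG _).reachable

theorem exists_sameCycle_of_adj {d : Dart G F} {w : G.V} (h : (G.factorGraph F).Adj d.v w) :
    ∃ d', (step hF).SameCycle d d' ∧ d'.v = w := by
  obtain ⟨-, e, he, hinc⟩ := h
  let x : Dart G F := ⟨e, d.v, he, hinc ▸ Sym2.mem_mk_left _ _⟩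
  have hx : x.symm.v = w := Dart.symm_v_eq hinc
  rcases Dart.eq_or_eq_turn hF (d := d) (d' := x) rfl with h | h
  · exact ⟨step hF d, Perm.sameCycle_apply_right.2 .rfl, by rw [step_apply, ← h]; exact hx⟩
  · exact ⟨(step hF)⁻¹ d, Perm.sameCycle_symm_apply_right.2 .rfl,
      by rw [step_inv_apply, ← h]; exact hx⟩

theorem exists_sameCycle_of_reachable {d : Dart G F} {w : G.V}
    (h : (G.factorGraph F).Reachable d.v w) : ∃ d', (step hF).SameCycle d d' ∧ d'.v = w := by
  suffices ∀ {u} (p : (G.factorGraph F).Walk u w) (d : Dart G F), d.v = u →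
      ∃ d', (step hF).SameCycle d d' ∧ d'.v = w from h.elim fun p => this p d rfl
  clear h
  intro u p
  induction p with
  | nil => exact fun d hd => ⟨d, .rfl, hd⟩
  | cons hadj _ ih =>
    rintro d rfl
    obtain ⟨d₁, hd₁, rfl⟩ := exists_sameCycle_of_adj hF hadj
    obtain ⟨d₂, hd₂, hw⟩ := ih d₁ rfl
    exact ⟨d₂, hd₁.trans hd₂, hw⟩

theorem card_connectedComponent_eq_minimalPeriod (hG : G.Loopless) (d : Dart G F) :
    Nat.card {v // (G.factorGraph F).connectedComponentMk v =
      (G.factorGraph F).connectedComponentMk d.v} = minimalPeriod (step hF) d := by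
  rw [← Perm.card_sameCycle]
  refine (Nat.card_eq_of_bijective (fun d' => ⟨d'.1.v,
    (SimpleGraph.ConnectedComponent.sound (reachable_of_sameCycle hF hG d'.2)).symm⟩) ⟨?_, ?_⟩).symm
  · rintro ⟨d₁, h₁⟩ ⟨d₂, h₂⟩ h
    rcases Dart.eq_or_eq_turn hF (congrArg Subtype.val h).symm with h' | h'
    · exact Subtype.ext h'.symm
    · refine absurd ?_ (not_sameCycle_symm hF hG d₁)
      rw [← Perm.sameCycle_apply_right, step_symm, ← h']
      exact h₁.symm.trans h₂
  · rintro ⟨w, hw⟩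
    obtain ⟨d', hd', rfl⟩ :=
      exists_sameCycle_of_reachable hF (SimpleGraph.ConnectedComponent.exact hw).symm
    exact ⟨⟨d', hd'⟩, rfl⟩

end Step

section Orientation

variable (hF : G.IsTwoFactor F) (P : Set (Dart G F)) (c : Dart G F → Fin 2)

def monochromaticEdges : Set G.E := {e | ∃ d ∈ P, d.e = e ∧ c (step hF d) = c d}

open Classical in
noncomputable def orientedColor (e : G.E) : Fin 2 :=
  if h : ∃ d ∈ P, d.e = e then c h.choose else 0

/- `P` selects one of the two traversals of each cycle of `F`: it is a union of cycles of `step`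
and contains exactly one dart of each edge. -/
variable {P} (hPcycle : ∀ {x y}, (step hF).SameCycle x y → (x ∈ P ↔ y ∈ P))
  (hPsymm : ∀ d : Dart G F, d.symm ∈ P ↔ d ∉ P)
include hPsymm

omit hF in
theorem eq_of_e_eq_of_mem {d d' : Dart G F} (hd : d ∈ P) (hd' : d' ∈ P) (h : d'.e = d.e) :
    d' = d :=
  (Dart.eq_or_eq_symm h).resolve_right fun h' => (hPsymm d).1 (h' ▸ hd') hd

omit hF in
theorem orientedColor_eq {d : Dart G F} (hd : d ∈ P) : orientedColor P c d.e = c d := by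
  have h : ∃ d' ∈ P, d'.e = d.e := ⟨d, hd, rfl⟩
  rw [orientedColor, dif_pos h, eq_of_e_eq_of_mem hPsymm hd h.choose_spec.1 h.choose_spec.2]

include hPcycle

theorem isProperEdgeColoringOn_orientedColor :
    G.IsProperEdgeColoringOn (F \ monochromaticEdges hF P c) (orientedColor P c) := by
  rintro e ⟨he, heS⟩ e' ⟨he', he'S⟩ hne ⟨v, hv, hv'⟩
  let x : Dart G F := ⟨e, v, he, hv⟩
  have hy : (⟨e', v, he', hv'⟩ : Dart G F) = x.turn hF :=
    (Dart.eq_or_eq_turn hF (d := x) (d' := ⟨e', v, he', hv'⟩) rfl).resolve_left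
      fun h => hne (congrArg Dart.e h).symm
  change orientedColor P c x.e ≠ orientedColor P c e'
  by_cases hx : x ∈ P
  · have hz : (step hF)⁻¹ x ∈ P := (hPcycle (Perm.sameCycle_symm_apply_right.2 .rfl)).1 hx
    have hze : ((step hF)⁻¹ x).e = e' := by rw [step_inv_apply, ← hy]; rfl
    rw [← hze, orientedColor_eq c hPsymm hz, orientedColor_eq c hPsymm hx]
    exact fun h => he'S ⟨_, hz, hze, by rw [Perm.eq_inv_iff_eq.1 rfl]; exact h⟩
  · have hsx : x.symm ∈ P := (hPsymm x).2 hx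
    have hy' : step hF x.symm ∈ P := (hPcycle (Perm.sameCycle_apply_right.2 .rfl)).1 hsx
    have hye : (step hF x.symm).e = e' := by rw [step_symm, ← hy]
    rw [← hye, orientedColor_eq c hPsymm hy', show x.e = x.symm.e from rfl,
      orientedColor_eq c hPsymm hsx]
    exact fun h => heS ⟨_, hsx, rfl, h.symm⟩

theorem card_monochromaticEdges_le (hG : G.Loopless)
    (hc : ∀ x, c (step hF x) = c x → Odd (minimalPeriod (step hF) x) ∧
      ∀ y, (step hF).SameCycle x y → c (step hF y) = c y → y = x) :
    Nat.card (monochromaticEdges hF P c) ≤ G.oddCycles F := by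
  choose d hdP hde hdc using fun e : monochromaticEdges hF P c => e.2
  refine Nat.card_le_card_of_injective
    (fun e => ⟨(G.factorGraph F).connectedComponentMk (d e).v, ?_⟩) fun e₁ e₂ h => ?_
  · rw [card_connectedComponent_eq_minimalPeriod hF hG]
    exact (hc _ (hdc e)).1
  · obtain ⟨d', hd', hv⟩ := exists_sameCycle_of_reachable hF
      (SimpleGraph.ConnectedComponent.exact (congrArg Subtype.val h))
    have hd'P : d' ∈ P := (hPcycle hd').1 (hdP e₁)
    have hd₂ : d e₂ = d' := by
      refine (Dart.eq_or_eq_turn hF hv.symm).resolve_right fun h' => ?_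
      rw [← step_symm] at h'
      exact (hPsymm d').1 ((hPcycle (Perm.sameCycle_apply_right.2 .rfl)).2 (h' ▸ hdP e₂)) hd'P
    have hd : d e₂ = d e₁ := (hc _ (hdc e₁)).2 _ (hd₂ ▸ hd') (hdc e₂)
    exact Subtype.ext ((hde e₁).symm.trans ((congrArg Dart.e hd).symm.trans (hde e₂)))

end Orientation

theorem exists_isProperEdgeColoringOn_of_isTwoFactor (hG : G.Loopless) (hF : G.IsTwoFactor F) :
    ∃ S : Set G.E, ∃ c : G.E → Fin 2,
      Nat.card S ≤ G.oddCycles F ∧ G.IsProperEdgeColoringOn (F \ S) c := by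
  obtain ⟨P, hPcycle, hPsymm⟩ := Perm.exists_transversal_of_involutive (step hF)
    Dart.symm_involutive.toPerm Dart.symm_involutive
    (Perm.SameCycle.apply_of_involutive Dart.symm_involutive (Dart.turn_involutive hF))
    (not_sameCycle_symm hF hG)
  obtain ⟨c, hc⟩ := (step hF).exists_coloring
  exact ⟨_, _, card_monochromaticEdges_le hF c hPcycle hPsymm hG hc,
    isProperEdgeColoringOn_orientedColor hF c hPcycle hPsymm⟩

theorem maxDegree_eq_of_regular [Nonempty G.V] {s : ℕ} (hreg : G.Regular s) :
    G.maxDegree = s := by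
  rw [maxDegree, funext hreg, Set.range_const, csSup_singleton]

section Decomposition

variable {s n : ℕ} {f : G.E → Option (Fin n)}

theorem IsDecomp.isOneFactor (hf : G.IsDecomp f) {e : G.E} (he : f e = none) :
    G.IsOneFactor {e | f e = none} :=
  hf.1.resolve_left fun h => h e he

theorem degree_eq_card_add (hf : ∀ i, G.IsTwoFactor {e | f e = some i}) (v : G.V) :
    G.degree v = Nat.card {e // f e = none ∧ v ∈ G.inc e} + 2 * n := by
  have hfiber : ∀ o, Nat.card {x : {e // v ∈ G.inc e} // f x = o} =
      Nat.card {e // f e = o ∧ v ∈ G.inc e} := fun o =>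
    Nat.card_congr ((Equiv.subtypeSubtypeEquivSubtypeInter _ (f · = o)).trans
      (Equiv.subtypeEquivRight fun _ => and_comm))
  rw [degree, ← Nat.card_congr (Equiv.sigmaFiberEquiv fun x : {e // v ∈ G.inc e} => f x),
    Nat.card_sigma, Fintype.sum_option, hfiber,
    Finset.sum_congr rfl fun i _ => (hfiber (some i)).trans (hf i v)]
  simp [mul_comm]

def decompColor (f : G.E → Option (Fin n)) (c : Fin n → G.E → Fin 2) (e : G.E) : ℕ :=
  (f e).elim (2 * n) fun i => 2 * i + c i e

theorem decompColor_lt (hreg : G.Regular s) (hf : G.IsDecomp f) (c : Fin n → G.E → Fin 2)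
    (e : G.E) : decompColor f c e < s := by
  obtain ⟨v, hv⟩ : ∃ v, v ∈ G.inc e := ⟨_, Sym2.out_fst_mem _⟩
  have hdeg := (hreg v).symm.trans (degree_eq_card_add hf.2 v)
  cases he : f e with
  | none =>
    have hone : Nat.card {e // f e = none ∧ v ∈ G.inc e} = 1 := hf.isOneFactor he v
    simp only [decompColor, he, Option.elim_none]
    omega
  | some i =>
    have := (c i e).2
    have := i.2
    simp only [decompColor, he, Option.elim_some]
    omega

theorem decompColor_ne (hf : G.IsDecomp f) {S : Fin n → Set G.E} {c : Fin n → G.E → Fin 2}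
    (hc : ∀ i, G.IsProperEdgeColoringOn ({e | f e = some i} \ S i) (c i))
    {e e' : G.E} (heS : e ∉ ⋃ i, S i) (heS' : e' ∉ ⋃ i, S i) (hne : e ≠ e') {v : G.V}
    (hv : v ∈ G.inc e) (hv' : v ∈ G.inc e') : decompColor f c e ≠ decompColor f c e' := by
  simp only [Set.mem_iUnion, not_exists] at heS heS'
  rcases he : f e with _ | i <;> rcases he' : f e' with _ | j <;>
    simp only [decompColor, he, he', Option.elim_none, Option.elim_some]
  · have hone : Subsingleton {e // f e = none ∧ v ∈ G.inc e} :=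
      (Nat.card_eq_one_iff_unique.1 (hf.isOneFactor he v)).1
    exact fun _ => hne (congrArg Subtype.val (hone.elim ⟨e, he, hv⟩ ⟨e', he', hv'⟩))
  · have := (c j e').2
    have := j.2
    omega
  · have := (c i e).2
    have := i.2
    omega
  · obtain rfl | hij := eq_or_ne i j
    · have := hc i e ⟨he, heS i⟩ e' ⟨he', heS' i⟩ hne ⟨v, hv, hv'⟩
      omega
    · have := (c i e).2
      have := (c j e').2
      have := Fin.val_ne_of_ne hij
      omega

theorem edgeColorable_deleteEdges_of_isDecomp (hreg : G.Regular s) (hf : G.IsDecomp f)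
    {S : Fin n → Set G.E} {c : Fin n → G.E → Fin 2}
    (hc : ∀ i, G.IsProperEdgeColoringOn ({e | f e = some i} \ S i) (c i)) :
    (G.deleteEdges (⋃ i, S i)).EdgeColorable s :=
  ⟨fun e => ⟨decompColor f c e.1, decompColor_lt hreg hf c e.1⟩,
    fun e e' hne ⟨_, hv, hv'⟩ h => decompColor_ne hf hc e.2 e'.2
      (fun h' => hne (Subtype.ext h')) hv hv' (congrArg Fin.val h)⟩

end Decomposition

end Mgraph

open Mgraph in
/-- For every connected `s`-regular finite loopless multigraph `G`: `r(G) ≤ ξ(G)`. -/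
theorem resistance_le_oddness (G : Mgraph) (hG : G.Loopless) (s : ℕ)
    (hreg : G.Regular s) (hconn : G.Connected) :
    (G.resistance : ℕ∞) ≤ G.oddness := by
  refine le_sInf ?_
  rintro _ ⟨n, f, hf, rfl⟩
  choose S c hS hc using fun i => exists_isProperEdgeColoringOn_of_isTwoFactor hG (hf.2 i)
  have := hconn.nonempty
  rw [Nat.cast_le, resistance, maxDegree_eq_of_regular hreg]
  calc G.resistanceTo s ≤ Nat.card (⋃ i, S i) :=
        Nat.sInf_le ⟨_, rfl, edgeColorable_deleteEdges_of_isDecomp hreg hf hc⟩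
    _ ≤ ∑ i, Nat.card (S i) := by
        simpa only [Nat.card_coe_set_eq] using Set.ncard_iUnion_le_of_fintype S
    _ ≤ G.decompOdd f := Finset.sum_le_sum fun i _ => hS i
end

section
/- Let G be a connected s-regular finite loopless multigraph with an even number of vertices. Then r(G) = 2 if and only if ξ(G) = 2. -/
/-!
The proof compares the two invariants through `r(G) ≤ ξ(G)`, and `ξ(G) ≤ r(G)` whenever
`r(G) ≤ 2`.

For `r ≤ ξ`, Hall's theorem orients every 2-factor so that each vertex is the tail of exactly
one edge; the orientation is a permutation of the vertices whose cycles are the cycles of the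
2-factor. Labelling each vertex by the parity of its position on its cycle and colouring each
edge by the label of its tail is a proper 2-edge-colouring once one edge is deleted from every
odd cycle. The 2-factors then use the colours `{2t, 2t + 1}` and the 1-factor the last colour.

For `ξ ≤ r`, take an `s`-edge-colouring of `G - R` with `|R| = r ≤ 2`. A vertex misses as many
colours as it has edges in `R`, and every colour class, being a matching of a graph of even
order, misses an even number of vertices; so the `2|R| ≤ 4` missing incidences involve at most
two colours, which we rename `0` and `1`. Pairing the colours `{2t, 2t + 1}` and adding `R` to
the pair `{0, 1}` gives a 2-factorization in which every odd cycle meets `R`, because colour `0`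
is a perfect matching away from the ends of `R`.
-/

open Finset

lemma even_card_filter_apply_ne {V : Type*} [DecidableEq V] (π : Equiv.Perm V) {X : Finset V}
    (hX : ∀ v ∈ X, π v ∈ X) (χ : V → ZMod 2) : Even #{v ∈ X | χ (π v) ≠ χ v} := by
  have himage : X.image π = X :=
    eq_of_subset_of_card_le (image_subset_iff.2 hX) (card_image_of_injective _ π.injective).ge
  have hsum : ∑ v ∈ X, χ (π v) = ∑ v ∈ X, χ v := by
    conv_rhs => rw [← himage, sum_image fun u _ w _ h => π.injective h]
  have hsub : ∀ a b : ZMod 2, (if a ≠ b then 1 else 0) = a - b := by decide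
  rw [← ZMod.natCast_eq_zero_iff_even, natCast_card_filter]
  simp_rw [hsub, sum_sub_distrib, hsum, sub_self]

lemma odd_card_of_filter_apply_eq_eq_singleton {V : Type*} [DecidableEq V] (π : Equiv.Perm V)
    {X : Finset V} (hX : ∀ v ∈ X, π v ∈ X) (χ : V → ZMod 2) {b : V}
    (hb : {v ∈ X | χ (π v) = χ v} = {b}) : Odd #X := by
  rw [← card_filter_add_card_filter_not (p := fun v => χ (π v) = χ v), hb, card_singleton]
  exact (even_card_filter_apply_ne π hX χ).one_add

lemma sameCycle_of_reachable {V : Type*} {H : SimpleGraph V} {π : Equiv.Perm V}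
    (hadj : ∀ u w, H.Adj u w → π.SameCycle u w) {u w : V} (h : H.Reachable u w) :
    π.SameCycle u w := by
  rw [SimpleGraph.reachable_iff_reflTransGen] at h
  induction h with
  | refl => exact Equiv.Perm.SameCycle.refl _ _
  | tail _ h ih => exact ih.trans (hadj _ _ h)

lemma find_pow_apply_eq_succ {V : Type*} [DecidableEq V] {π : Equiv.Perm V} {r r' v : V}
    (hr : r' = r) (h : ∃ k : ℕ, (π ^ k) r = v) (h' : ∃ k : ℕ, (π ^ k) r' = π v)
    (hv : π v ≠ r) :
    Nat.find h' = Nat.find h + 1 := by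
  subst hr
  refine le_antisymm (Nat.find_min' _ ?_) ?_
  · rw [pow_succ', Equiv.Perm.mul_apply, Nat.find_spec h]
  · have hspec := Nat.find_spec h'
    obtain ⟨j, hj⟩ := Nat.exists_eq_succ_of_ne_zero (n := Nat.find h') fun h0 =>
      hv (by rw [h0] at hspec; exact hspec.symm)
    rw [hj, pow_succ', Equiv.Perm.mul_apply, π.injective.eq_iff] at hspec
    exact hj ▸ Nat.succ_le_succ (Nat.find_min' _ hspec)

/-- If the cycles of `π` are the components of `H`, label every vertex by the parity of its
distance along `π` from a root of its component: the labels alternate along `π`, except at the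
predecessor of a root, and there only if the component is odd. -/
lemma exists_labelling_card_nonalternating_le {V : Type*} [Fintype V] (H : SimpleGraph V)
    (π : Equiv.Perm V) (hπ : ∀ v, H.Reachable v (π v))
    (hadj : ∀ u w, H.Adj u w → π.SameCycle u w) :
    ∃ χ : V → ZMod 2, Nat.card {b // χ (π b) = χ b} ≤
      Nat.card {C : H.ConnectedComponent //
        Odd (Nat.card {v // H.connectedComponentMk v = C})} := by
  classical
  have hmk : ∀ v, H.connectedComponentMk (π v) = H.connectedComponentMk v := fun v =>
    SimpleGraph.ConnectedComponent.eq.2 (hπ v).symm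
  let root : V → V := fun v => (H.connectedComponentMk v).out
  have hex : ∀ v, ∃ k : ℕ, (π ^ k) (root v) = v := fun v =>
    (sameCycle_of_reachable hadj (SimpleGraph.ConnectedComponent.eq.1
      (H.connectedComponentMk v).out_eq)).exists_nat_pow_eq
  let χ : V → ZMod 2 := fun v => (Nat.find (hex v) : ℕ)
  have hbad : ∀ b, χ (π b) = χ b → π b = root b := by
    intro b hb
    by_contra hne
    have hsucc := find_pow_apply_eq_succ (by simp only [root, hmk]) (hex b) (hex (π b)) hne
    simp [χ, hsucc] at hb
  have hodd : ∀ b, χ (π b) = χ b →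
      Odd (Nat.card {v // H.connectedComponentMk v = H.connectedComponentMk b}) := by
    intro b hb
    rw [Nat.card_eq_fintype_card, Fintype.card_subtype]
    refine odd_card_of_filter_apply_eq_eq_singleton π (fun v hv => ?_) χ (b := b)
      (eq_singleton_iff_unique_mem.2 ⟨by simp [hb], fun v hv => π.injective ?_⟩)
    · simp only [mem_filter, mem_univ, true_and] at hv ⊢
      rw [hmk, hv]
    · simp only [mem_filter, mem_univ, true_and] at hv
      rw [hbad v hv.2, hbad b hb]
      simp only [root, hv.1]
  refine ⟨χ, Nat.card_le_card_of_injective (fun b => ⟨_, hodd b.1 b.2⟩) fun b b' h => ?_⟩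
  have hbb' : H.connectedComponentMk b.1 = H.connectedComponentMk b'.1 := congrArg Subtype.val h
  apply Subtype.ext (π.injective _)
  rw [hbad b b.2, hbad b' b'.2]
  simp only [root, hbb']

lemma card_filter_eq_zero_add_sum {ι : Type*} {A : Finset ι} {d : ι → ℕ}
    (hd : ∀ x ∈ A, d x ≤ 1) : #{x ∈ A | d x = 0} + ∑ x ∈ A, d x = #A := by
  rw [card_filter, ← sum_add_distrib, card_eq_sum_ones]
  exact sum_congr rfl fun x hx => by have := hd x hx; split_ifs <;> omega

lemma exists_perm_lt_two {s : ℕ} (hs : 2 ≤ s) {K : Finset ℕ} (hK : K ⊆ range s)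
    (hK2 : #K ≤ 2) :
    ∃ σ : Equiv.Perm ℕ, (∀ k, σ k < s ↔ k < s) ∧ ∀ k ∈ K, σ k < 2 := by
  obtain ⟨u, hKu, hus, hu⟩ := exists_subsuperset_card_eq hK hK2 (by simpa using hs)
  obtain ⟨i, j, hij, rfl⟩ := card_eq_two.1 hu
  have hi : i < s := mem_range.1 (hus (by simp))
  have hj : j < s := mem_range.1 (hus (by simp))
  have hswap : ∀ a b, a < s → b < s → ∀ k, Equiv.swap a b k < s ↔ k < s := by
    intro a b ha hb k
    rw [Equiv.swap_apply_def]
    split_ifs <;> omega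
  have hj0 : Equiv.swap i 0 j ≠ 0 := by
    simpa using (Equiv.swap i 0).injective.ne hij.symm
  refine ⟨Equiv.swap (Equiv.swap i 0 j) 1 * Equiv.swap i 0, fun k => ?_, fun k hk => ?_⟩
  · rw [Equiv.Perm.mul_apply, hswap _ _ ((hswap _ _ hi (by omega) j).2 hj) (by omega),
      hswap _ _ hi (by omega)]
  · rcases mem_insert.1 (hKu hk) with rfl | hk
    · rw [Equiv.Perm.mul_apply, Equiv.swap_apply_left,
        Equiv.swap_apply_of_ne_of_ne hj0.symm (by omega)]
      omega
    · rw [mem_singleton.1 hk, Equiv.Perm.mul_apply, Equiv.swap_apply_left]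
      omega

namespace Mgraph

open scoped Classical

noncomputable instance (G : Mgraph) : Fintype G.V := Fintype.ofFinite _
noncomputable instance (G : Mgraph) : Fintype G.E := Fintype.ofFinite _

variable {G : Mgraph}

noncomputable def incEdges (G : Mgraph) (F : Set G.E) (v : G.V) : Finset G.E :=
  {e | e ∈ F ∧ v ∈ G.inc e}

@[simp]
lemma mem_incEdges {F : Set G.E} {v : G.V} {e : G.E} :
    e ∈ G.incEdges F v ↔ e ∈ F ∧ v ∈ G.inc e := by
  simp [incEdges]

noncomputable def degIn (G : Mgraph) (F : Set G.E) (v : G.V) : ℕ := #(G.incEdges F v)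

def IsProperOn (G : Mgraph) {α : Type*} (F : Set G.E) (c : G.E → α) : Prop :=
  ∀ e ∈ F, ∀ f ∈ F, e ≠ f → (∃ v, v ∈ G.inc e ∧ v ∈ G.inc f) → c e ≠ c f

lemma natCard_incident_eq_degIn (F : Set G.E) (v : G.V) :
    Nat.card {e : G.E // e ∈ F ∧ v ∈ G.inc e} = G.degIn F v := by
  rw [Nat.card_eq_fintype_card, Fintype.card_subtype]
  rfl

lemma degree_eq_degIn_univ (v : G.V) : G.degree v = G.degIn Set.univ v := by
  rw [degree, Nat.card_eq_fintype_card, Fintype.card_subtype, degIn]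
  congr 1
  ext e
  simp

lemma degIn_union {F F' : Set G.E} (h : Disjoint F F') (v : G.V) :
    G.degIn (F ∪ F') v = G.degIn F v + G.degIn F' v := by
  rw [degIn, degIn, degIn, ← card_union_of_disjoint]
  · congr 1
    ext e
    simp [or_and_right]
  · exact disjoint_left.2 fun e h1 h2 =>
      h.ne_of_mem (mem_incEdges.1 h1).1 (mem_incEdges.1 h2).1 rfl

lemma eq_of_degIn_le_one {F : Set G.E} {v : G.V} (h : G.degIn F v ≤ 1) {e f : G.E}
    (he : e ∈ F) (hf : f ∈ F) (hve : v ∈ G.inc e) (hvf : v ∈ G.inc f) : e = f :=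
  card_le_one.1 h e (mem_incEdges.2 ⟨he, hve⟩) f (mem_incEdges.2 ⟨hf, hvf⟩)

lemma exists_mem_inc (e : G.E) : ∃ v, v ∈ G.inc e := ⟨_, Sym2.out_fst_mem _⟩

lemma ne_of_inc_eq (hG : G.Loopless) {e : G.E} {u w : G.V} (h : G.inc e = s(u, w)) : u ≠ w :=
  fun huw => hG e (by rw [h, huw]; exact Sym2.mk_isDiag_iff.2 rfl)

lemma sum_degIn_eq_sum_card_inter (F : Set G.E) (X : Finset G.V) :
    ∑ v ∈ X, G.degIn F v = ∑ e with e ∈ F, #(X ∩ (G.inc e).toFinset) := by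
  simp only [degIn, incEdges, card_filter, sum_filter]
  rw [sum_comm]
  refine sum_congr rfl fun e _ => ?_
  by_cases he : e ∈ F
  · rw [if_pos he, ← filter_mem_eq_inter, card_filter]
    simp [he]
  · simp [he]

lemma card_inc_toFinset (hG : G.Loopless) (e : G.E) : #(G.inc e).toFinset = 2 :=
  Sym2.card_toFinset_of_not_isDiag _ (hG e)

lemma sum_degIn_eq_two_mul (hG : G.Loopless) (F : Set G.E) :
    ∑ v, G.degIn F v = 2 * #{e | e ∈ F} := by
  simp [sum_degIn_eq_sum_card_inter, card_inc_toFinset hG, mul_comm]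

lemma even_sum_degIn_of_closed (hG : G.Loopless) {F : Set G.E} {X : Finset G.V}
    (hX : ∀ e ∈ F, ∀ u ∈ G.inc e, ∀ w ∈ G.inc e, u ∈ X → w ∈ X) :
    Even (∑ v ∈ X, G.degIn F v) := by
  rw [sum_degIn_eq_sum_card_inter]
  refine even_sum _ fun e he => ?_
  by_cases hmeet : ∃ u ∈ G.inc e, u ∈ X
  · obtain ⟨u, hu, huX⟩ := hmeet
    rw [inter_eq_right.2 fun w hw => hX e (by simpa using he) u hu w (by simpa using hw) huX,
      card_inc_toFinset hG]
    exact even_two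
  · push Not at hmeet
    rw [show X ∩ (G.inc e).toFinset = ∅ by
      ext w; simpa using fun hwX hw => hmeet w hw hwX]
    exact Even.zero

lemma factorGraph_adj_of_mem_inc {F : Set G.E} {e : G.E} (he : e ∈ F) {u w : G.V}
    (hu : u ∈ G.inc e) (hw : w ∈ G.inc e) (huw : u ≠ w) : (G.factorGraph F).Adj u w :=
  ⟨huw, e, he, (Sym2.mem_and_mem_iff huw).1 ⟨hu, hw⟩⟩

lemma connectedComponentMk_eq_of_mem_inc {F : Set G.E} {e : G.E} (he : e ∈ F) {u w : G.V}
    (hu : u ∈ G.inc e) (hw : w ∈ G.inc e) :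
    (G.factorGraph F).connectedComponentMk u = (G.factorGraph F).connectedComponentMk w := by
  obtain rfl | huw := eq_or_ne u w
  · rfl
  · exact SimpleGraph.ConnectedComponent.connectedComponentMk_eq_of_adj
      (factorGraph_adj_of_mem_inc he hu hw huw)

lemma exists_mem_inc_of_odd_component (hG : G.Loopless) {F R M : Set G.E} (hM : M ⊆ F)
    (hcov : ∀ v, G.degIn R v = 0 → G.degIn M v = 1) (C : (G.factorGraph F).ConnectedComponent)
    (hC : Odd (Nat.card {v // (G.factorGraph F).connectedComponentMk v = C})) :
    ∃ e ∈ R, ∃ v ∈ G.inc e, (G.factorGraph F).connectedComponentMk v = C := by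
  -- otherwise `M` would be a perfect matching of the odd component `C`
  by_contra! hR
  set X : Finset G.V := {v | (G.factorGraph F).connectedComponentMk v = C}
  have hdeg : ∀ v ∈ X, G.degIn M v = 1 := fun v hv => hcov v <| card_eq_zero.2 <|
    filter_eq_empty_iff.2 fun e _ he => hR e he.1 v he.2 (by simpa [X] using hv)
  have hclosed : ∀ e ∈ M, ∀ u ∈ G.inc e, ∀ w ∈ G.inc e, u ∈ X → w ∈ X := by
    intro e he u hu w hw huX
    simpa [X, ← connectedComponentMk_eq_of_mem_inc (hM he) hu hw] using huX
  have hX : Nat.card {v // (G.factorGraph F).connectedComponentMk v = C} = #X := by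
    rw [Nat.card_eq_fintype_card, Fintype.card_subtype]
  have hsum : ∑ v ∈ X, G.degIn M v = #X := by simp [sum_congr rfl hdeg]
  rw [hX, ← hsum, ← Nat.not_even_iff_odd] at hC
  exact hC (even_sum_degIn_of_closed hG hclosed)

lemma oddCycles_le_of_cover (hG : G.Loopless) {F R M : Set G.E} (hR : R ⊆ F) (hM : M ⊆ F)
    (hcov : ∀ v, G.degIn R v = 0 → G.degIn M v = 1) : G.oddCycles F ≤ Nat.card R := by
  choose e heR v hv hvC using
    fun C : {C // Odd (Nat.card {v // (G.factorGraph F).connectedComponentMk v = C})} =>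
      exists_mem_inc_of_odd_component hG hM hcov C.1 C.2
  refine Nat.card_le_card_of_injective (fun C => ⟨e C, heR C⟩) fun C C' h => ?_
  have h' : e C = e C' := congrArg Subtype.val h
  rw [Subtype.ext_iff, ← hvC, ← hvC]
  exact connectedComponentMk_eq_of_mem_inc (hR (heR C)) (hv C) (h' ▸ hv C')

lemma exists_injective_mem_inc {F : Set G.E} (hF : ∀ v, 2 ≤ G.degIn F v) :
    ∃ τ : G.V → G.E, Function.Injective τ ∧ ∀ v, τ v ∈ F ∧ v ∈ G.inc (τ v) := by
  let t : G.V → Finset G.E := G.incEdges F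
  suffices hall : ∀ X : Finset G.V, #X ≤ #(X.biUnion t) by
    obtain ⟨τ, hinj, hτ⟩ := (all_card_le_biUnion_card_iff_exists_injective t).1 hall
    exact ⟨τ, hinj, fun v => by simpa [t] using hτ v⟩
  -- `X` sends at least `2 |X|` incidences to the edges at `X`, each of which has two ends
  intro X
  have hsub : X.biUnion t ⊆ univ.filter (· ∈ F) := fun e he => by
    obtain ⟨v, -, he⟩ := mem_biUnion.1 he
    simp_all [t]
  have hout : ∀ e ∈ univ.filter (· ∈ F), e ∉ X.biUnion t →
      #(X ∩ (G.inc e).toFinset) = 0 := fun e he heX => by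
    refine card_eq_zero.2 (eq_empty_of_forall_notMem fun v hv => heX ?_)
    simp only [mem_inter, Sym2.mem_toFinset] at hv
    exact mem_biUnion.2 ⟨v, hv.1, by simp_all [t]⟩
  have hends : ∀ e : G.E, #(X ∩ (G.inc e).toFinset) ≤ 2 := fun e =>
    (card_le_card inter_subset_right).trans (by rw [Sym2.card_toFinset]; split_ifs <;> omega)
  have : 2 * #X ≤ 2 * #(X.biUnion t) := calc
    2 * #X ≤ ∑ v ∈ X, G.degIn F v := by
      simpa [mul_comm] using card_nsmul_le_sum X _ 2 fun v _ => hF v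
    _ = ∑ e ∈ X.biUnion t, #(X ∩ (G.inc e).toFinset) := by
      rw [sum_degIn_eq_sum_card_inter, sum_subset hsub hout]
    _ ≤ 2 * #(X.biUnion t) := by
      simpa [mul_comm] using sum_le_sum fun e (_ : e ∈ X.biUnion t) => hends e
  omega

/-- `τ v` is the edge leaving `v` and `π v` its head. -/
lemma IsTwoFactor.exists_orientation (hG : G.Loopless) {F : Set G.E} (hF : G.IsTwoFactor F) :
    ∃ (τ : G.V → G.E) (π : Equiv.Perm G.V), Function.Injective τ ∧
      (∀ v, τ v ∈ F ∧ G.inc (τ v) = s(v, π v)) ∧ ∀ e ∈ F, ∃ v, τ v = e := by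
  have hdeg : ∀ v, G.degIn F v = 2 := fun v => (natCard_incident_eq_degIn F v).symm.trans (hF v)
  obtain ⟨τ, hinj, hτ⟩ := exists_injective_mem_inc fun v => (hdeg v).ge
  let π : G.V → G.V := fun v => Sym2.Mem.other (hτ v).2
  have hinc : ∀ v, G.inc (τ v) = s(v, π v) := fun v => (Sym2.other_spec _).symm
  have hne : ∀ v, π v ≠ v := fun v => (ne_of_inc_eq hG (hinc v)).symm
  have hπ : Function.Injective π := by
    intro a b hab
    -- otherwise `τ a`, `τ b` and `τ (π a)` are three edges of `F` at `π a`
    by_contra hab'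
    have hsub : {τ a, τ b, τ (π a)} ⊆ G.incEdges F (π a) := by
      intro e he
      simp only [mem_insert, mem_singleton] at he
      rcases he with rfl | rfl | rfl
      · simp [(hτ a).1, hinc]
      · simp [(hτ b).1, hinc, hab]
      · simp [(hτ _).1, (hτ _).2]
    have h3 := card_le_card hsub
    rw [card_eq_three.2 ⟨_, _, _, hinj.ne hab', hinj.ne (hne a).symm,
      hinj.ne fun h => hne b (h ▸ hab.symm), rfl⟩] at h3
    exact absurd (hdeg (π a)) (by rw [degIn]; omega)
  refine ⟨τ, Equiv.ofBijective π (Finite.injective_iff_bijective.1 hπ), hinj,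
    fun v => ⟨(hτ v).1, hinc v⟩, ?_⟩
  have hcard : #(univ.filter (· ∈ F)) = #(univ.image τ) := by
    have := sum_degIn_eq_two_mul hG F
    simp only [hdeg, sum_const, smul_eq_mul, card_univ] at this
    rw [card_image_of_injective _ hinj, card_univ]
    omega
  have himage : univ.image τ = univ.filter (· ∈ F) := eq_of_subset_of_card_le
    (fun e he => by obtain ⟨v, -, rfl⟩ := mem_image.1 he; simp [(hτ v).1]) hcard.le
  intro e he
  have he' : e ∈ univ.image τ := himage ▸ (by simpa using he)
  simpa using he'

lemma isProperOn_diff_of_orientation {F : Set G.E} {τ : G.V → G.E} {π : Equiv.Perm G.V}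
    (hinc : ∀ v, G.inc (τ v) = s(v, π v))
    (hsurj : ∀ e ∈ F, ∃ v, τ v = e) {α : Type*} {χ : G.V → α} {c : G.E → α}
    (hc : ∀ v, c (τ v) = χ v) : G.IsProperOn (F \ τ '' {b | χ (π b) = χ b}) c := by
  have hgood : ∀ v, τ v ∉ τ '' {b | χ (π b) = χ b} → χ (π v) ≠ χ v :=
    fun v hv h => hv ⟨v, h, rfl⟩
  rintro _ ⟨he, heS⟩ _ ⟨hf, hfS⟩ hef ⟨x, hxe, hxf⟩
  obtain ⟨a, rfl⟩ := hsurj _ he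
  obtain ⟨b, rfl⟩ := hsurj _ hf
  have hab : a ≠ b := fun h => hef (h ▸ rfl)
  rw [hc, hc]
  rw [hinc, Sym2.mem_iff] at hxe hxf
  rcases hxe with rfl | rfl <;> rcases hxf with h | h
  · exact absurd h hab
  · rw [h]; exact hgood b hfS
  · rw [← h]; exact (hgood a heS).symm
  · exact absurd (π.injective h) hab

theorem IsTwoFactor.exists_isProperOn_diff (hG : G.Loopless) {F : Set G.E}
    (hF : G.IsTwoFactor F) :
    ∃ S : Set G.E, Nat.card S ≤ G.oddCycles F ∧
      ∃ c : G.E → ZMod 2, G.IsProperOn (F \ S) c := by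
  obtain ⟨τ, π, hτ, hinc, hsurj⟩ := hF.exists_orientation hG
  have hreach : ∀ v, (G.factorGraph F).Reachable v (π v) := fun v => by
    refine (factorGraph_adj_of_mem_inc (hinc v).1 ?_ ?_ (ne_of_inc_eq hG (hinc v).2)).reachable
    all_goals simp [(hinc v).2]
  have hadj : ∀ u w, (G.factorGraph F).Adj u w → π.SameCycle u w := by
    rintro u w ⟨-, e, he, huw⟩
    obtain ⟨a, rfl⟩ := hsurj e he
    rw [(hinc a).2, Sym2.eq_iff] at huw
    rcases huw with ⟨rfl, rfl⟩ | ⟨rfl, rfl⟩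
    · exact Equiv.Perm.sameCycle_apply_right.2 (Equiv.Perm.SameCycle.refl _ _)
    · exact (Equiv.Perm.sameCycle_apply_right.2 (Equiv.Perm.SameCycle.refl _ _)).symm
  obtain ⟨χ, hχ⟩ := exists_labelling_card_nonalternating_le _ π hreach hadj
  exact ⟨τ '' {b | χ (π b) = χ b}, (Nat.card_image_le (Set.toFinite _)).trans hχ, _,
    isProperOn_diff_of_orientation (fun v => (hinc v).2) hsurj (hτ.extend_apply χ 0)⟩

lemma edgeColorable_deleteEdges_iff {S : Set G.E} {k : ℕ} :
    (G.deleteEdges S).EdgeColorable k ↔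
      ∃ c : G.E → ℕ, (∀ e ∉ S, c e < k) ∧ G.IsProperOn Sᶜ c := by
  constructor
  · rintro ⟨c, hc⟩
    refine ⟨fun e => if h : e ∈ S then 0 else c ⟨e, h⟩, fun e he => by simp [he], ?_⟩
    intro e he f hf hef hshare
    simp only [Set.mem_compl_iff] at he hf
    simp only [he, hf, dite_false]
    exact fun h => hc ⟨e, he⟩ ⟨f, hf⟩ (fun h => hef (congrArg Subtype.val h)) hshare
      (Fin.ext h)
  · rintro ⟨c, hlt, hc⟩
    exact ⟨fun e => ⟨c e.1, hlt e.1 e.2⟩, fun e f hef hshare h =>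
      hc e.1 e.2 f.1 f.2 (Subtype.coe_ne_coe.2 hef) hshare (congrArg Fin.val h)⟩

variable {n s : ℕ} {f : G.E → Option (Fin n)}

lemma IsDecomp.degIn_none_add (hreg : G.Regular s) (hf : G.IsDecomp f) (v : G.V) :
    G.degIn {e | f e = none} v + 2 * n = s := by
  have hfib : ∀ i, G.degIn {e | f e = some i} v = 2 := fun i =>
    (natCard_incident_eq_degIn _ v).symm.trans (hf.2 i v)
  have hsplit : G.degIn Set.univ v = ∑ o : Option (Fin n), G.degIn {e | f e = o} v := by
    rw [degIn, card_eq_sum_card_fiberwise (f := f) (t := univ) fun _ _ => mem_univ _]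
    refine sum_congr rfl fun o _ => congrArg card ?_
    ext e
    simp [and_comm]
  rw [← hreg v, degree_eq_degIn_univ, hsplit, Fintype.sum_option]
  simp [hfib, mul_comm]

def decompColoring (f : G.E → Option (Fin n)) (c : Fin n → G.E → ZMod 2) (e : G.E) : ℕ :=
  (f e).elim (2 * n) fun i => 2 * i + (c i e).val

lemma IsDecomp.decompColoring_lt (hreg : G.Regular s) (hf : G.IsDecomp f)
    (c : Fin n → G.E → ZMod 2) (e : G.E) : decompColoring f c e < s := by
  obtain ⟨v, hv⟩ := exists_mem_inc e
  have hs := hf.degIn_none_add hreg v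
  rcases hfe : f e with _ | i
  · have : 1 ≤ G.degIn {e | f e = none} v := card_pos.2 ⟨e, by simp [hfe, hv]⟩
    simp only [decompColoring, hfe, Option.elim]
    omega
  · have := i.2
    have := (c i e).val_lt
    simp only [decompColoring, hfe, Option.elim]
    omega

lemma IsDecomp.isProperOn_decompColoring (hf : G.IsDecomp f) {S : Fin n → Set G.E}
    {c : Fin n → G.E → ZMod 2} (hc : ∀ i, G.IsProperOn ({e | f e = some i} \ S i) (c i)) :
    G.IsProperOn (⋃ i, S i)ᶜ (decompColoring f c) := by
  intro e he e' he' hne ⟨v, hv, hv'⟩ heq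
  simp only [Set.mem_compl_iff, Set.mem_iUnion, not_exists] at he he'
  rcases hfe : f e with _ | i <;> rcases hfe' : f e' with _ | j <;>
    simp only [decompColoring, hfe, hfe', Option.elim] at heq
  · have h1 : G.IsOneFactor {e | f e = none} := hf.1.resolve_left fun h => h e hfe
    exact hne (eq_of_degIn_le_one ((natCard_incident_eq_degIn _ v).symm.trans (h1 v)).le
      hfe hfe' hv hv')
  · have := j.2
    have := (c j e').val_lt
    omega
  · have := i.2
    have := (c i e).val_lt
    omega
  · have := (c i e).val_lt
    have := (c j e').val_lt
    obtain rfl : i = j := Fin.ext (by omega)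
    exact hc i e ⟨hfe, he i⟩ e' ⟨hfe', he' i⟩ hne ⟨v, hv, hv'⟩
      (ZMod.val_injective _ (by omega))

theorem IsDecomp.resistanceTo_le_decompOdd (hG : G.Loopless) (hreg : G.Regular s)
    (hf : G.IsDecomp f) : G.resistanceTo s ≤ G.decompOdd f := by
  choose S hS c hc using fun i => (hf.2 i).exists_isProperOn_diff hG
  calc G.resistanceTo s ≤ Nat.card ↑(⋃ i, S i) :=
        Nat.sInf_le ⟨_, rfl, edgeColorable_deleteEdges_iff.2
          ⟨decompColoring f c, fun e _ => hf.decompColoring_lt hreg c e,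
            hf.isProperOn_decompColoring hc⟩⟩
    _ ≤ ∑ i, Nat.card (S i) := by
        simp only [Nat.card_coe_set_eq]
        exact Set.ncard_iUnion_le_of_fintype S
    _ ≤ G.decompOdd f := sum_le_sum fun i _ => hS i

def colorClass (R : Set G.E) (c : G.E → ℕ) (k : ℕ) : Set G.E := {e | e ∉ R ∧ c e = k}

variable {R : Set G.E} {c : G.E → ℕ}

lemma degIn_colorClass_le_one (hc : G.IsProperOn Rᶜ c) (k : ℕ) (v : G.V) :
    G.degIn (colorClass R c k) v ≤ 1 := by
  rw [degIn, card_le_one]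
  intro e he f hf
  by_contra hef
  obtain ⟨⟨heR, rfl⟩, hve⟩ := mem_incEdges.1 he
  obtain ⟨⟨hfR, hfk⟩, hvf⟩ := mem_incEdges.1 hf
  exact hc e heR f hfR hef ⟨v, hve, hvf⟩ hfk.symm

lemma sum_degIn_colorClass_add_degIn (hreg : G.Regular s) (hlt : ∀ e ∉ R, c e < s) (v : G.V) :
    ∑ k ∈ range s, G.degIn (colorClass R c k) v + G.degIn R v = s := by
  have hcompl : G.degIn Rᶜ v = ∑ k ∈ range s, G.degIn (colorClass R c k) v := by
    rw [degIn, card_eq_sum_card_fiberwise (s := G.incEdges Rᶜ v) (t := range s) fun e he =>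
      mem_range.2 (hlt e (mem_incEdges.1 he).1)]
    refine sum_congr rfl fun k _ => congrArg card ?_
    ext e
    simp only [colorClass, mem_filter, mem_incEdges, Set.mem_compl_iff, Set.mem_ofPred_eq]
    tauto
  rw [← hcompl, ← hreg v, degree_eq_degIn_univ, ← Set.compl_union_self R,
    degIn_union disjoint_compl_left]

lemma card_missing_colors (hreg : G.Regular s) (hlt : ∀ e ∉ R, c e < s)
    (hc : G.IsProperOn Rᶜ c) (v : G.V) :
    #{k ∈ range s | G.degIn (colorClass R c k) v = 0} = G.degIn R v := by
  have h1 := card_filter_eq_zero_add_sum fun k (_ : k ∈ range s) => degIn_colorClass_le_one hc k v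
  have h2 := sum_degIn_colorClass_add_degIn hreg hlt v
  rw [card_range] at h1
  omega

lemma even_card_missing_vertices (hG : G.Loopless) (heven : Even (Nat.card G.V)) {M : Set G.E}
    (hM : ∀ v, G.degIn M v ≤ 1) : Even #{v | G.degIn M v = 0} := by
  have h := card_filter_eq_zero_add_sum fun v (_ : v ∈ univ) => hM v
  rw [sum_degIn_eq_two_mul hG, card_univ, ← Nat.card_eq_fintype_card] at h
  exact (Nat.even_add.1 (h ▸ heven)).2 (even_two_mul _)

lemma card_missed_colors_le_two (hG : G.Loopless) (hreg : G.Regular s)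
    (heven : Even (Nat.card G.V)) (hR : Nat.card R ≤ 2) (hlt : ∀ e ∉ R, c e < s)
    (hc : G.IsProperOn Rᶜ c) :
    #{k ∈ range s | ∃ v, G.degIn (colorClass R c k) v = 0} ≤ 2 := by
  set K := {k ∈ range s | ∃ v, G.degIn (colorClass R c k) v = 0}
  have htotal : ∑ k ∈ range s, #{v | G.degIn (colorClass R c k) v = 0} = 2 * Nat.card R := by
    have := sum_card_bipartiteAbove_eq_sum_card_bipartiteBelow (s := range s) (t := univ)
      (r := fun k v => G.degIn (colorClass R c k) v = 0)
    simp only [bipartiteAbove, bipartiteBelow] at this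
    rw [this, sum_congr rfl fun v _ => card_missing_colors hreg hlt hc v, sum_degIn_eq_two_mul hG,
      Nat.card_eq_fintype_card, Fintype.card_subtype]
  have htwo : ∀ k ∈ K, 2 ≤ #{v | G.degIn (colorClass R c k) v = 0} := by
    intro k hk
    obtain ⟨v, hv⟩ := (mem_filter.1 hk).2
    have hpos : 0 < #{v | G.degIn (colorClass R c k) v = 0} := card_pos.2 ⟨v, by simpa using hv⟩
    obtain ⟨m, hm⟩ := even_card_missing_vertices hG heven (degIn_colorClass_le_one hc k)
    omega
  have : 2 * #K ≤ 2 * 2 := calc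
    2 * #K ≤ ∑ k ∈ K, #{v | G.degIn (colorClass R c k) v = 0} := by
      simpa [mul_comm] using card_nsmul_le_sum K _ 2 htwo
    _ ≤ ∑ k ∈ range s, #{v | G.degIn (colorClass R c k) v = 0} :=
      sum_le_sum_of_subset (filter_subset _ _)
    _ ≤ 2 * 2 := htotal ▸ Nat.mul_le_mul_left 2 hR
  omega

/-- The colours `2t` and `2t + 1` make up the `t`-th 2-factor, which for `t = 0` also takes the
edges of `R`; for odd `s` the last colour `2n + 2` is the 1-factor. -/
noncomputable def pairDecomp (R : Set G.E) (c : G.E → ℕ) (n : ℕ) (e : G.E) :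
    Option (Fin (n + 1)) :=
  if e ∈ R then some 0 else if h : c e / 2 < n + 1 then some ⟨c e / 2, h⟩ else none

lemma setOf_pairDecomp_eq_zero (n : ℕ) :
    {e | pairDecomp R c n e = some 0} = R ∪ (colorClass R c 0 ∪ colorClass R c 1) := by
  ext e
  simp only [pairDecomp, colorClass, Set.mem_ofPred_eq, Set.mem_union]
  split_ifs with h1 h2 <;> simp [Fin.ext_iff, h1] <;> omega

lemma setOf_pairDecomp_eq_some {n : ℕ} {t : Fin (n + 1)} (ht : t ≠ 0) :
    {e | pairDecomp R c n e = some t} = colorClass R c (2 * t) ∪ colorClass R c (2 * t + 1) := by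
  have ht' : (t : ℕ) ≠ 0 := fun h => ht (Fin.ext h)
  ext e
  simp only [pairDecomp, colorClass, Set.mem_ofPred_eq, Set.mem_union]
  split_ifs with h1 h2 <;> simp [Fin.ext_iff, h1] <;> omega

lemma setOf_pairDecomp_eq_none {n : ℕ} (hlt : ∀ e ∉ R, c e ≤ 2 * n + 2) :
    {e | pairDecomp R c n e = none} = colorClass R c (2 * n + 2) := by
  ext e
  simp only [pairDecomp, colorClass, Set.mem_ofPred_eq]
  split_ifs with h1 h2 <;> simp [*] <;> have := hlt e h1 <;> omega

lemma disjoint_colorClass {k l : ℕ} (hkl : k ≠ l) :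
    Disjoint (colorClass R c k) (colorClass R c l) :=
  Set.disjoint_left.2 fun _ he hf => hkl (he.2.symm.trans hf.2)

lemma disjoint_colorClass_left (k : ℕ) : Disjoint R (colorClass R c k) :=
  Set.disjoint_left.2 fun _ he hf => hf.1 he

lemma degIn_add_degIn_colorClass_zero_one (hreg : G.Regular s) (hs : 2 ≤ s)
    (hlt : ∀ e ∉ R, c e < s)
    (hperf : ∀ k, 2 ≤ k → k < s → ∀ v, G.degIn (colorClass R c k) v = 1) (v : G.V) :
    G.degIn R v + (G.degIn (colorClass R c 0) v + G.degIn (colorClass R c 1) v) = 2 := by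
  have hsum := sum_degIn_colorClass_add_degIn hreg hlt v
  obtain ⟨m, rfl⟩ : ∃ m, s = m + 2 := ⟨s - 2, by omega⟩
  rw [sum_range_succ', sum_range_succ', sum_congr rfl fun k hk =>
    hperf (k + 1 + 1) (by omega) (by simp only [mem_range] at hk; omega) v] at hsum
  simp only [sum_const, card_range, smul_eq_mul, mul_one, zero_add] at hsum
  omega

lemma degIn_setOf_pairDecomp
    (hperf : ∀ k, 2 ≤ k → k < s → ∀ v, G.degIn (colorClass R c k) v = 1)
    (h01 : ∀ v, G.degIn R v + (G.degIn (colorClass R c 0) v + G.degIn (colorClass R c 1) v) = 2)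
    (hn : 2 * n + 2 ≤ s) (t : Fin (n + 1)) (v : G.V) :
    G.degIn {e | pairDecomp R c n e = some t} v = 2 := by
  by_cases ht : t = 0
  · rw [ht, setOf_pairDecomp_eq_zero, degIn_union (Set.disjoint_union_right.2
      ⟨disjoint_colorClass_left 0, disjoint_colorClass_left 1⟩),
      degIn_union (disjoint_colorClass zero_ne_one), ← h01 v]
  · have ht' : (t : ℕ) ≠ 0 := fun h => ht (Fin.ext h)
    rw [setOf_pairDecomp_eq_some ht, degIn_union (disjoint_colorClass (by omega)),
      hperf _ (by omega) (by omega) v, hperf _ (by omega) (by omega) v]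

lemma isDecomp_pairDecomp
    (hperf : ∀ k, 2 ≤ k → k < s → ∀ v, G.degIn (colorClass R c k) v = 1)
    (h01 : ∀ v, G.degIn R v + (G.degIn (colorClass R c 0) v + G.degIn (colorClass R c 1) v) = 2)
    (hlt : ∀ e ∉ R, c e < s) (hn : s = 2 * n + 2 ∨ s = 2 * n + 3) :
    G.IsDecomp (pairDecomp R c n) := by
  refine ⟨?_, fun t v => (natCard_incident_eq_degIn _ v).trans
    (degIn_setOf_pairDecomp hperf h01 (by omega) t v)⟩
  have hnone := setOf_pairDecomp_eq_none (R := R) (c := c) (n := n) fun e he => by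
    have := hlt e he
    omega
  rcases hn with hs | hs
  · refine Or.inl fun e he => ?_
    have he' : e ∈ colorClass R c (2 * n + 2) := hnone ▸ he
    exact absurd (hlt e he'.1) (by rw [he'.2]; omega)
  · refine Or.inr fun v => ?_
    rw [natCard_incident_eq_degIn, hnone, hperf _ (by omega) (by omega) v]

lemma decompOdd_pairDecomp_le (hG : G.Loopless) (hc : G.IsProperOn Rᶜ c)
    (hperf : ∀ k, 2 ≤ k → k < s → ∀ v, G.degIn (colorClass R c k) v = 1)
    (h01 : ∀ v, G.degIn R v + (G.degIn (colorClass R c 0) v + G.degIn (colorClass R c 1) v) = 2)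
    (hn : 2 * n + 2 ≤ s) : G.decompOdd (pairDecomp R c n) ≤ Nat.card R := by
  rw [decompOdd, sum_eq_single 0 (fun t _ ht => ?_) (by simp)]
  · rw [setOf_pairDecomp_eq_zero]
    refine oddCycles_le_of_cover hG Set.subset_union_left
      (Set.subset_union_right.trans' Set.subset_union_left) fun v hv => ?_
    have := h01 v
    have := degIn_colorClass_le_one hc 0 v
    have := degIn_colorClass_le_one hc 1 v
    omega
  · have ht' : (t : ℕ) ≠ 0 := fun h => ht (Fin.ext h)
    rw [setOf_pairDecomp_eq_some ht]
    refine Nat.le_zero.1 ((oddCycles_le_of_cover hG (Set.empty_subset _) Set.subset_union_left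
      fun v _ => hperf (2 * t) (by omega) (by omega) v).trans ?_)
    simp

theorem exists_decomp_of_isOneFactor_colorClass (hG : G.Loopless) (hreg : G.Regular s)
    (hs : 2 ≤ s) (hlt : ∀ e ∉ R, c e < s) (hc : G.IsProperOn Rᶜ c)
    (hperf : ∀ k, 2 ≤ k → k < s → ∀ v, G.degIn (colorClass R c k) v = 1) :
    ∃ (n : ℕ) (g : G.E → Option (Fin n)), G.IsDecomp g ∧ G.decompOdd g ≤ Nat.card R := by
  obtain ⟨n, hn⟩ : ∃ n, s = 2 * n + 2 ∨ s = 2 * n + 3 := ⟨s / 2 - 1, by omega⟩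
  have h01 := degIn_add_degIn_colorClass_zero_one hreg hs hlt hperf
  exact ⟨n + 1, pairDecomp R c n, isDecomp_pairDecomp hperf h01 hlt hn,
    decompOdd_pairDecomp_le hG hc hperf h01 (by omega)⟩

lemma exists_decomp_decompOdd_eq_zero_of_lt_two (hreg : G.Regular s) (hs : s < 2) :
    ∃ (n : ℕ) (g : G.E → Option (Fin n)), G.IsDecomp g ∧ G.decompOdd g = 0 := by
  refine ⟨0, fun _ => none, ⟨?_, fun i => i.elim0⟩, by simp [decompOdd]⟩
  interval_cases s
  · refine Or.inl fun e _ => ?_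
    obtain ⟨v, hv⟩ := exists_mem_inc e
    have h0 : G.degIn Set.univ v = 0 := (degree_eq_degIn_univ v).symm.trans (hreg v)
    exact (card_pos.2 ⟨e, mem_incEdges.2 ⟨Set.mem_univ e, hv⟩⟩).ne' h0
  · refine Or.inr fun v => ?_
    rw [natCard_incident_eq_degIn,
      show {e : G.E | (none : Option (Fin 0)) = none} = Set.univ by simp,
      ← degree_eq_degIn_univ, hreg v]

theorem exists_decomp_decompOdd_le (hG : G.Loopless) (hreg : G.Regular s)
    (heven : Even (Nat.card G.V)) (hR : Nat.card R ≤ 2) (hlt : ∀ e ∉ R, c e < s)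
    (hc : G.IsProperOn Rᶜ c) :
    ∃ (n : ℕ) (g : G.E → Option (Fin n)), G.IsDecomp g ∧ G.decompOdd g ≤ Nat.card R := by
  rcases lt_or_ge s 2 with hs | hs
  · obtain ⟨n, g, hg, h0⟩ := exists_decomp_decompOdd_eq_zero_of_lt_two hreg hs
    exact ⟨n, g, hg, h0.trans_le (Nat.zero_le _)⟩
  obtain ⟨σ, hσ, hσK⟩ := exists_perm_lt_two hs (filter_subset _ _)
    (card_missed_colors_le_two hG hreg heven hR hlt hc)
  have hclass : ∀ k, colorClass R (fun e => σ (c e)) k = colorClass R c (σ.symm k) :=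
    fun k => by
    ext e
    simp [colorClass, Equiv.eq_symm_apply]
  refine exists_decomp_of_isOneFactor_colorClass hG hreg hs (fun e he => (hσ _).2 (hlt e he))
    (fun e he f hf hef hsh h => hc e he f hf hef hsh (σ.injective h)) fun k hk2 hks v => ?_
  rw [hclass]
  refine le_antisymm (degIn_colorClass_le_one hc _ v) (Nat.one_le_iff_ne_zero.2 fun h0 => ?_)
  have := hσK _ (mem_filter.2 ⟨mem_range.2 ((hσ _).1 (by simpa using hks)), v, h0⟩)
  simp only [Equiv.apply_symm_apply] at this
  omega

lemma exists_natCard_eq_resistanceTo (G : Mgraph) (k : ℕ) :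
    ∃ S : Set G.E, Nat.card S = G.resistanceTo k ∧ (G.deleteEdges S).EdgeColorable k := by
  have hne : {k' | ∃ S : Set G.E, Nat.card S = k' ∧
      (G.deleteEdges S).EdgeColorable k}.Nonempty :=
    ⟨_, Set.univ, rfl, edgeColorable_deleteEdges_iff.2
      ⟨fun _ => 0, fun e he => absurd trivial he, fun e he => absurd trivial he⟩⟩
  exact Nat.sInf_mem hne

theorem resistance_eq_resistanceTo (hreg : G.Regular s) : G.resistance = G.resistanceTo s := by
  rcases isEmpty_or_nonempty G.V with hV | hV
  · have : IsEmpty G.E := ⟨fun e => hV.false (exists_mem_inc e).choose⟩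
    have h0 : ∀ k, G.resistanceTo k = 0 := fun k => Nat.sInf_eq_zero.2 <| Or.inl
      ⟨∅, by simp, fun e => isEmptyElim e.1, fun e => isEmptyElim e.1⟩
    rw [resistance, h0, h0]
  · rw [resistance, maxDegree, show G.degree = fun _ => s from funext hreg, Set.range_const,
      csSup_singleton]

lemma IsDecomp.oddness_le_decompOdd (hf : G.IsDecomp f) : G.oddness ≤ G.decompOdd f := by
  unfold oddness
  exact sInf_le ⟨_, f, hf, rfl⟩

theorem resistanceTo_le_oddness (hG : G.Loopless) (hreg : G.Regular s) :
    (G.resistanceTo s : ℕ∞) ≤ G.oddness :=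
  le_sInf fun _ ⟨_, _, hf, hk⟩ => hk ▸ by exact_mod_cast hf.resistanceTo_le_decompOdd hG hreg

theorem oddness_le_resistanceTo (hG : G.Loopless) (hreg : G.Regular s)
    (heven : Even (Nat.card G.V)) (h2 : G.resistanceTo s ≤ 2) :
    G.oddness ≤ G.resistanceTo s := by
  obtain ⟨S, hS, hcol⟩ := exists_natCard_eq_resistanceTo G s
  obtain ⟨c, hlt, hc⟩ := edgeColorable_deleteEdges_iff.1 hcol
  obtain ⟨n, g, hg, hodd⟩ := exists_decomp_decompOdd_le hG hreg heven (hS ▸ h2) hlt hc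
  exact hg.oddness_le_decompOdd.trans (by exact_mod_cast hS ▸ hodd)

end Mgraph

open Mgraph in
theorem resistance_eq_two_iff_oddness_eq_two_general (G : Mgraph) (hG : G.Loopless) (s : ℕ)
    (hreg : G.Regular s) (heven : Even (Nat.card G.V)) :
    G.resistance = 2 ↔ G.oddness = 2 := by
  rw [resistance_eq_resistanceTo hreg]
  have hle := resistanceTo_le_oddness hG hreg
  have hge := oddness_le_resistanceTo hG hreg heven
  constructor
  · intro hr
    rw [hr] at hle hge
    exact le_antisymm (hge le_rfl) (by exact_mod_cast hle)
  · intro hx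
    have h2 : G.resistanceTo s ≤ 2 := by exact_mod_cast hx ▸ hle
    exact_mod_cast le_antisymm h2 (by exact_mod_cast hx ▸ hge h2)

open Mgraph in
/-- For a connected `s`-regular finite loopless multigraph of even order:
`r(G) = 2` if and only if `ξ(G) = 2`. -/
theorem resistance_eq_two_iff_oddness_eq_two (G : Mgraph) (hG : G.Loopless) (s : ℕ)
    (hreg : G.Regular s) (hconn : G.Connected) (heven : Even (Nat.card G.V)) :
    G.resistance = 2 ↔ G.oddness = 2 :=
  resistance_eq_two_iff_oddness_eq_two_general G hG s hreg heven
end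

section
/- For each positive integer k, there exists a finite loopless multigraph G_k with r_v(G_k) − r'_v(G_k) = k. -/
/-!
Take a triangle whose sides are tripled together with `k` disjoint triangles whose sides are
doubled, so that `Δ = 6`. The nine edges of the tripled triangle pairwise meet, so any
`6`-edge-colourable (or class 1) vertex-deleted subgraph must miss a vertex of it; deleting one
vertex already gives a `6`-edge-colourable graph, hence `r'_v = 1`. After that deletion,
however, the maximum degree is at most `4`, while an intact doubled triangle still needs `6`
colours: a class 1 subgraph must also miss a vertex of each doubled triangle, and missing one
vertex of every triangle suffices, hence `r_v = k + 1`.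
-/

namespace Mgraph

section General

variable {G : Mgraph}

theorem chromaticIndex_le_of_edgeColorable {n : ℕ} (h : G.EdgeColorable n) :
    G.chromaticIndex ≤ n :=
  Nat.sInf_le h

theorem edgeColorable_chromaticIndex (G : Mgraph) : G.EdgeColorable G.chromaticIndex := by
  obtain ⟨n, ⟨e⟩⟩ := Finite.exists_equiv_fin G.E
  exact Nat.sInf_mem (s := {k | G.EdgeColorable k})
    ⟨n, e, fun a b hab _ h => hab (e.injective h)⟩

theorem card_le_chromaticIndex {ι : Type} (f : ι → G.E) (hf : Function.Injective f)
    (hadj : ∀ a b, ∃ v, v ∈ G.inc (f a) ∧ v ∈ G.inc (f b)) :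
    Nat.card ι ≤ G.chromaticIndex := by
  obtain ⟨c, hc⟩ := G.edgeColorable_chromaticIndex
  have hinj : Function.Injective (c ∘ f) := fun a b h =>
    by_contra fun hab => hc (f a) (f b) (hf.ne hab) (hadj a b) h
  simpa using Nat.card_le_card_of_injective _ hinj

theorem card_le_degree {ι : Type} {v : G.V} (f : ι → G.E) (hf : Function.Injective f)
    (hv : ∀ a, v ∈ G.inc (f a)) : Nat.card ι ≤ G.degree v :=
  Nat.card_le_card_of_injective (fun a => ⟨f a, hv a⟩) fun _ _ h => hf (congrArg Subtype.val h)

theorem degree_le_card {ι : Type} [Finite ι] {v : G.V} (f : ι → G.E)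
    (hf : ∀ e, v ∈ G.inc e → e ∈ Set.range f) : G.degree v ≤ Nat.card ι :=
  calc G.degree v = Nat.card (Set.range fun e : {e // v ∈ G.inc e} => e.1) :=
        (Nat.card_range_of_injective Subtype.val_injective).symm
    _ ≤ Nat.card (Set.range f) :=
        Nat.card_mono (Set.toFinite _) (Set.range_subset_iff.2 fun e => hf e.1 e.2)
    _ ≤ Nat.card ι := Finite.card_range_le f

theorem degree_le_maxDegree (v : G.V) : G.degree v ≤ G.maxDegree :=
  le_csSup (Set.finite_range _).bddAbove ⟨v, rfl⟩

theorem maxDegree_le {n : ℕ} (h : ∀ v, G.degree v ≤ n) : G.maxDegree ≤ n :=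
  csSup_le' (Set.forall_mem_range.2 h)

theorem maxDegree_le_chromaticIndex (G : Mgraph) : G.maxDegree ≤ G.chromaticIndex :=
  maxDegree_le fun v =>
    card_le_chromaticIndex (fun e : {e // v ∈ G.inc e} => e.1) Subtype.val_injective
      fun a b => ⟨v, a.2, b.2⟩

theorem mem_inc_deleteVerts {S : Set G.V} (e : (G.deleteVerts S).E) {v : G.V} (hv : v ∉ S) :
    (⟨v, hv⟩ : (G.deleteVerts S).V) ∈ (G.deleteVerts S).inc e ↔ v ∈ G.inc e.1 := by
  change _ ∈ (G.inc e.1).pmap _ e.2 ↔ _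
  rw [Sym2.mem_pmap_iff]
  exact ⟨fun ⟨_, ha, h⟩ => Subtype.mk.inj h ▸ ha, fun h => ⟨v, h, rfl⟩⟩

theorem degree_deleteVerts_le_card {S : Set G.V} {ι : Type} [Finite ι] {v : G.V} (hv : v ∉ S)
    (f : ι → G.E) (hf : ∀ e, v ∈ G.inc e → (∀ w ∈ G.inc e, w ∉ S) → e ∈ Set.range f) :
    (G.deleteVerts S).degree ⟨v, hv⟩ ≤ Nat.card ι := by
  let star := {e : (G.deleteVerts S).E // ⟨v, hv⟩ ∈ (G.deleteVerts S).inc e}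
  have key : ∀ e : star, e.1.1 ∈ Set.range f :=
    fun e => hf _ ((mem_inc_deleteVerts _ hv).1 e.2) e.1.2
  calc (G.deleteVerts S).degree ⟨v, hv⟩ = Nat.card (Set.range fun e : star => e.1.1) :=
        (Nat.card_range_of_injective fun _ _ h => Subtype.ext (Subtype.ext h)).symm
    _ ≤ Nat.card (Set.range f) := Nat.card_mono (Set.toFinite _) (Set.range_subset_iff.2 key)
    _ ≤ Nat.card ι := Finite.card_range_le f

theorem edgeColorable_deleteVerts {S : Set G.V} {D : ℕ} (c : G.E → ℕ)
    (hc : ∀ e f, e ≠ f → (∃ v, v ∈ G.inc e ∧ v ∈ G.inc f) → c e ≠ c f)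
    (hD : ∀ e, (∀ v ∈ G.inc e, v ∉ S) → c e < D) : (G.deleteVerts S).EdgeColorable D := by
  refine ⟨fun e => ⟨c e.1, hD e.1 e.2⟩, ?_⟩
  rintro e f hef ⟨⟨v, hv⟩, hve, hvf⟩ hcol
  exact hc e.1 f.1 (fun h => hef (Subtype.ext h))
    ⟨v, (mem_inc_deleteVerts e hv).1 hve, (mem_inc_deleteVerts f hv).1 hvf⟩
    (Fin.mk.inj_iff.1 hcol)

end General

/-- Vertex-disjoint triangles indexed by `T`, each side of triangle `t` carrying `μ t`
parallel edges; the edge `⟨t, i, m⟩` is the `m`-th copy of the side opposite to `(t, i)`. -/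
abbrev fatTriangles {T : Type} [Finite T] (μ : T → ℕ) : Mgraph where
  V := T × Fin 3
  E := Σ t, Fin 3 × Fin (μ t)
  inc e := s((e.1, e.2.1 + 1), (e.1, e.2.1 + 2))

namespace fatTriangles

section

variable {T : Type} [Finite T] {μ : T → ℕ}

theorem mem_inc {s t : T} {c i : Fin 3} {m : Fin (μ t)} :
    ((s, c) : (fatTriangles μ).V) ∈ (fatTriangles μ).inc ⟨t, i, m⟩ ↔ s = t ∧ c ≠ i := by
  have h3 : ∀ c i : Fin 3, c ≠ i ↔ c = i + 1 ∨ c = i + 2 := by decide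
  change (s, c) ∈ s((t, i + 1), (t, i + 2)) ↔ _
  rw [Sym2.mem_iff, h3]
  simp only [Prod.mk.injEq]
  tauto

theorem loopless : (fatTriangles μ).Loopless := by
  have h3 : ∀ i : Fin 3, i + 1 ≠ i + 2 := by decide
  rintro ⟨t, i, m⟩ h
  exact h3 i (Prod.mk.inj (Sym2.mk_isDiag_iff.1 h)).2

theorem exists_mem_inc_inc (t : T) (p q : Fin 3 × Fin (μ t)) :
    ∃ c : Fin 3, ((t, c) : (fatTriangles μ).V) ∈ (fatTriangles μ).inc ⟨t, p⟩ ∧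
      ((t, c) : (fatTriangles μ).V) ∈ (fatTriangles μ).inc ⟨t, q⟩ := by
  have third : ∀ i j : Fin 3, ∃ c, c ≠ i ∧ c ≠ j := by decide
  obtain ⟨c, hp, hq⟩ := third p.1 q.1
  exact ⟨c, mem_inc.2 ⟨rfl, hp⟩, mem_inc.2 ⟨rfl, hq⟩⟩

theorem degree_eq (t : T) (c : Fin 3) : (fatTriangles μ).degree (t, c) = 2 * μ t := by
  let f : {i : Fin 3 // i ≠ c} × Fin (μ t) → (fatTriangles μ).E := fun p => ⟨t, p.1.1, p.2⟩
  have hcard : Nat.card ({i : Fin 3 // i ≠ c} × Fin (μ t)) = 2 * μ t := by simp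
  refine hcard ▸ le_antisymm (degree_le_card f ?_) (card_le_degree f ?_ ?_)
  · rintro ⟨s, i, m⟩ h
    obtain ⟨rfl, hci⟩ := mem_inc.1 h
    exact ⟨(⟨i, hci.symm⟩, m), rfl⟩
  · rintro ⟨⟨i, hi⟩, m⟩ ⟨⟨i', hi'⟩, m'⟩ h
    obtain ⟨rfl, rfl⟩ := Prod.mk.inj (sigma_mk_injective (β := fun t => Fin 3 × Fin (μ t)) h)
    rfl
  · exact fun p => mem_inc.2 ⟨rfl, p.1.2.symm⟩

variable {S : Set (fatTriangles μ).V}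

theorem degree_deleteVerts_le_two_mul {t : T} {c : Fin 3} (hv : (t, c) ∉ S) :
    ((fatTriangles μ).deleteVerts S).degree ⟨(t, c), hv⟩ ≤ 2 * μ t :=
  (degree_deleteVerts_le_card hv (fun e : {e // (t, c) ∈ (fatTriangles μ).inc e} => e.1)
    fun e he _ => ⟨⟨e, he⟩, rfl⟩).trans_eq (degree_eq t c)

/-- Once `(t, a)` is deleted, only the side opposite to it survives in triangle `t`. -/
theorem degree_deleteVerts_le_of_mem {t : T} {a c : Fin 3} (ha : (t, a) ∈ S)
    (hv : (t, c) ∉ S) : ((fatTriangles μ).deleteVerts S).degree ⟨(t, c), hv⟩ ≤ μ t := by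
  refine (degree_deleteVerts_le_card hv (fun m : Fin (μ t) => ⟨t, a, m⟩) ?_).trans_eq (by simp)
  rintro ⟨s, i, m⟩ h hS
  obtain ⟨rfl, -⟩ := mem_inc.1 h
  obtain rfl : i = a := by_contra fun hia => hS _ (mem_inc.2 ⟨rfl, Ne.symm hia⟩) ha
  exact ⟨m, rfl⟩

theorem exists_mem_of_chromaticIndex_lt {t : T}
    (h : ((fatTriangles μ).deleteVerts S).chromaticIndex < 3 * μ t) : ∃ c, (t, c) ∈ S := by
  by_contra! hS
  have hsurv : ∀ p : Fin 3 × Fin (μ t), ∀ v ∈ (fatTriangles μ).inc ⟨t, p⟩, v ∉ S := by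
    rintro p ⟨s, c⟩ hv
    obtain ⟨rfl, -⟩ := mem_inc.1 hv
    exact hS c
  have := card_le_chromaticIndex (G := (fatTriangles μ).deleteVerts S)
    (fun p => ⟨⟨t, p⟩, hsurv p⟩)
    (fun p q h => sigma_mk_injective (β := fun t => Fin 3 × Fin (μ t)) (congrArg Subtype.val h))
    fun p q => by
      obtain ⟨c, hp, hq⟩ := exists_mem_inc_inc t p q
      exact ⟨⟨(t, c), hS c⟩, (mem_inc_deleteVerts _ _).2 hp, (mem_inc_deleteVerts _ _).2 hq⟩
  exact h.not_ge (by simpa using this)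

/-- Colour the `m`-th copy of the side opposite to `(t, i)` by `m + μ t * i`; if `(t, 0)` is
deleted, only the colours `m < μ t` are used in triangle `t`. -/
theorem edgeColorable_deleteVerts {D : ℕ}
    (hD : ∀ t, ((t, 0) ∈ S ∧ μ t ≤ D) ∨ 3 * μ t ≤ D) :
    ((fatTriangles μ).deleteVerts S).EdgeColorable D := by
  refine Mgraph.edgeColorable_deleteVerts (fun e => finProdFinEquiv e.2) ?_ ?_
  · rintro ⟨t, p⟩ ⟨t', q⟩ hne ⟨⟨s, c⟩, hp, hq⟩ hcol
    obtain ⟨rfl, -⟩ := mem_inc.1 hp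
    obtain ⟨rfl, -⟩ := mem_inc.1 hq
    obtain rfl : p = q := finProdFinEquiv.injective (Fin.ext hcol)
    exact hne rfl
  · rintro ⟨t, i, m⟩ hS
    rcases hD t with ⟨h0, hμ⟩ | hμ
    · obtain rfl : i = 0 := by_contra fun hi => hS _ (mem_inc.2 ⟨rfl, Ne.symm hi⟩) h0
      simpa using m.isLt.trans_le hμ
    · exact (finProdFinEquiv (i, m)).isLt.trans_le hμ

end

def witnessMult (k : ℕ) : Option (Fin k) → ℕ
  | none => 3
  | some _ => 2

variable {k : ℕ}

theorem maxDegree_witness : (fatTriangles (witnessMult k)).maxDegree = 6 := by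
  refine le_antisymm (maxDegree_le ?_)
    ((degree_eq (μ := witnessMult k) none 0).symm.trans_le (degree_le_maxDegree _))
  rintro ⟨_ | j, c⟩ <;> simp [degree_eq, witnessMult]

theorem rv'_witness : (fatTriangles (witnessMult k)).rv' = 1 := by
  refine IsLeast.csInf_eq ⟨⟨{(none, 0)}, Nat.card_unique, ?_⟩, ?_⟩
  · rw [maxDegree_witness]
    refine chromaticIndex_le_of_edgeColorable (edgeColorable_deleteVerts ?_)
    rintro (_ | j)
    · exact .inl ⟨rfl, by norm_num [witnessMult]⟩
    · exact .inr le_rfl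
  · rintro n ⟨S, rfl, hS⟩
    rw [maxDegree_witness] at hS
    obtain ⟨c, hc⟩ :=
      exists_mem_of_chromaticIndex_lt (t := none) (hS.trans_lt (by norm_num [witnessMult]))
    have : Nonempty S := ⟨⟨_, hc⟩⟩
    exact Nat.card_pos

theorem forall_exists_mem_of_classOne {S : Set (fatTriangles (witnessMult k)).V}
    (hS : ((fatTriangles (witnessMult k)).deleteVerts S).ClassOne) (t : Option (Fin k)) :
    ∃ c, (t, c) ∈ S := by
  have hΔ : ((fatTriangles (witnessMult k)).deleteVerts S).maxDegree ≤ 6 := maxDegree_le fun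
    | ⟨(t, c), hv⟩ => (degree_deleteVerts_le_two_mul hv).trans (by cases t <;> simp [witnessMult])
  obtain ⟨a, ha⟩ : ∃ a, (none, a) ∈ S :=
    exists_mem_of_chromaticIndex_lt (Eq.trans_lt hS (hΔ.trans_lt (by norm_num [witnessMult])))
  have hΔ' : ((fatTriangles (witnessMult k)).deleteVerts S).maxDegree ≤ 4 := maxDegree_le fun
    | ⟨(none, c), hv⟩ => (degree_deleteVerts_le_of_mem ha hv).trans (by simp [witnessMult])
    | ⟨(some j, c), hv⟩ => (degree_deleteVerts_le_two_mul hv).trans (by simp [witnessMult])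
  cases t with
  | none => exact ⟨a, ha⟩
  | some j =>
    exact exists_mem_of_chromaticIndex_lt
      (Eq.trans_lt hS (hΔ'.trans_lt (by norm_num [witnessMult])))

theorem classOne_deleteVerts_range :
    ((fatTriangles (witnessMult k)).deleteVerts (Set.range fun t => (t, 0))).ClassOne := by
  set S : Set (fatTriangles (witnessMult k)).V := Set.range fun t => (t, 0)
  have hcol : ((fatTriangles (witnessMult k)).deleteVerts S).chromaticIndex ≤ 3 := by
    refine chromaticIndex_le_of_edgeColorable
      (edgeColorable_deleteVerts fun t => .inl ⟨⟨t, rfl⟩, ?_⟩)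
    cases t <;> simp [witnessMult]
  have hsurv : ∀ m : Fin 3, ∀ v ∈ (fatTriangles (witnessMult k)).inc ⟨none, 0, m⟩, v ∉ S := by
    rintro m ⟨s, c⟩ hv ⟨t, hts⟩
    obtain ⟨rfl, rfl⟩ := Prod.mk.inj hts
    exact (mem_inc.1 hv).2 rfl
  have h1 : ((none, 1) : (fatTriangles (witnessMult k)).V) ∉ S := by
    rintro ⟨t, ht⟩
    exact absurd (Prod.mk.inj ht).2 (by decide)
  have hdeg : 3 ≤ ((fatTriangles (witnessMult k)).deleteVerts S).degree ⟨_, h1⟩ := by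
    simpa using card_le_degree (G := (fatTriangles (witnessMult k)).deleteVerts S)
      (fun m : Fin 3 => ⟨⟨none, 0, m⟩, hsurv m⟩)
      (fun _ _ h => (Prod.mk.inj (eq_of_heq (Sigma.mk.inj_iff.1 (congrArg Subtype.val h)).2)).2)
      fun m => (mem_inc_deleteVerts _ h1).2 (mem_inc.2 ⟨rfl, by decide⟩)
  exact le_antisymm (hcol.trans (hdeg.trans (degree_le_maxDegree _)))
    (maxDegree_le_chromaticIndex _)

theorem rv_witness : (fatTriangles (witnessMult k)).rv = k + 1 := by
  refine IsLeast.csInf_eq ⟨⟨_, ?_, classOne_deleteVerts_range⟩, ?_⟩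
  · rw [Nat.card_range_of_injective fun s t h => (Prod.mk.inj h).1]
    simp
  · rintro n ⟨S, rfl, hS⟩
    choose c hc using forall_exists_mem_of_classOne hS
    simpa using Nat.card_le_card_of_injective (fun t => (⟨(t, c t), hc t⟩ : S))
      fun s t h => (Prod.mk.inj (congrArg Subtype.val h)).1

end fatTriangles

end Mgraph

open Mgraph in
theorem exists_rv_sub_rv'_eq_general (k : ℕ) :
    ∃ G : Mgraph, G.Loopless ∧ (G.rv : ℤ) - (G.rv' : ℤ) = (k : ℤ) :=
  ⟨fatTriangles (fatTriangles.witnessMult k), fatTriangles.loopless, by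
    rw [fatTriangles.rv_witness, fatTriangles.rv'_witness]
    omega⟩

open Mgraph in
/-- For each positive integer `k` there is a finite loopless multigraph `G_k` with
`r_v(G_k) − r'_v(G_k) = k`. -/
theorem exists_rv_sub_rv'_eq (k : ℕ) (hk : 1 ≤ k) :
    ∃ G : Mgraph, G.Loopless ∧ (G.rv : ℤ) - (G.rv' : ℤ) = (k : ℤ) :=
  exists_rv_sub_rv'_eq_general k
end
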